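/- arXiv:1605.04026 — 5 statements merged into one kernel-verified Lean document; each statement's English description precedes it below -/
import Mathlib

section
/- Suppose that for n players and m items there exists a truthful ρ-approximation mechanism for the ordinal model. Then there exists a truthful ρ-approximation mechanism for the cardinal model with n players and m items. -/
open Finset

/-- The total value of a bundle `S` of items under the additive valuation given by `v`. -/
noncomputable def bundleVal {m : ℕ} (v : Fin m → ℝ) (S : Finset (Fin m)) : ℝ :=
  ∑ j ∈ S, v j

/-- The bundle of items received by player `i` under the allocation `alloc`,
where `alloc j` is the player that receives item `j`.  (Such functions are exactly the
partitions of the items into `n` possibly empty bundles.) -/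
def bundleOf {n m : ℕ} (alloc : Fin m → Fin n) (i : Fin n) : Finset (Fin m) :=
  Finset.univ.filter fun j => alloc j = i

/-- The `n`-maximin share of a player with additive valuation `v` over the item set `Fin m`:
the maximum over all partitions of the items into `n` bundles of the minimum bundle value. -/
noncomputable def mms {m : ℕ} (n : ℕ) (v : Fin m → ℝ) : ℝ :=
  ⨆ f : Fin m → Fin n, ⨅ i : Fin n, bundleVal v (bundleOf f i)

/-- Truthfulness of a mechanism in the cardinal model. -/
def CardTruthful {n m : ℕ} (A : (Fin n → Fin m → ℝ) → (Fin m → Fin n)) : Prop :=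
  ∀ V : Fin n → Fin m → ℝ, (∀ i j, 0 ≤ V i j) →
    ∀ (i : Fin n) (v' : Fin m → ℝ), (∀ j, 0 ≤ v' j) →
      bundleVal (V i) (bundleOf (A (Function.update V i v')) i) ≤
        bundleVal (V i) (bundleOf (A V) i)

/-- `ρ`-approximation of a mechanism in the cardinal model. -/
def CardApprox {n m : ℕ} (ρ : ℝ) (A : (Fin n → Fin m → ℝ) → (Fin m → Fin n)) : Prop :=
  ∀ V : Fin n → Fin m → ℝ, (∀ i j, 0 ≤ V i j) →
    ∀ i : Fin n, ρ * mms n (V i) ≤ bundleVal (V i) (bundleOf (A V) i)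

/-- A ranking (strict total order on the items) is encoded as a permutation
`σ : Fin m ≃ Fin m` sending positions to items, `σ 0` being the top item.
A valuation `v` is consistent with the ranking `σ` if the values are
non-increasing along the positions of the ranking. -/
def Consistent {m : ℕ} (v : Fin m → ℝ) (σ : Equiv.Perm (Fin m)) : Prop :=
  ∀ k l : Fin m, k ≤ l → v (σ l) ≤ v (σ k)

/-- Truthfulness of a mechanism in the ordinal model. -/
def OrdTruthful {n m : ℕ} (A : (Fin n → Equiv.Perm (Fin m)) → (Fin m → Fin n)) : Prop :=
  ∀ (R : Fin n → Equiv.Perm (Fin m)) (i : Fin n) (v : Fin m → ℝ),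
    (∀ j, 0 ≤ v j) → Consistent v (R i) →
      ∀ σ' : Equiv.Perm (Fin m),
        bundleVal v (bundleOf (A (Function.update R i σ')) i) ≤
          bundleVal v (bundleOf (A R) i)

/-- `ρ`-approximation of a mechanism in the ordinal model. -/
def OrdApprox {n m : ℕ} (ρ : ℝ) (A : (Fin n → Equiv.Perm (Fin m)) → (Fin m → Fin n)) : Prop :=
  ∀ V : Fin n → Fin m → ℝ, (∀ i j, 0 ≤ V i j) →
    ∀ R : Fin n → Equiv.Perm (Fin m), (∀ i, Consistent (V i) (R i)) →
      ∀ i : Fin n, ρ * mms n (V i) ≤ bundleVal (V i) (bundleOf (A R) i)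

/-- Truthfulness of a mechanism in the public rankings model with publicly known rankings `R`. -/
def PRTruthful {n m : ℕ} (R : Fin n → Equiv.Perm (Fin m))
    (A : (Fin n → Fin m → ℝ) → (Fin m → Fin n)) : Prop :=
  ∀ V : Fin n → Fin m → ℝ, (∀ i j, 0 ≤ V i j) → (∀ i, Consistent (V i) (R i)) →
    ∀ (i : Fin n) (v' : Fin m → ℝ), (∀ j, 0 ≤ v' j) → Consistent v' (R i) →
      bundleVal (V i) (bundleOf (A (Function.update V i v')) i) ≤
        bundleVal (V i) (bundleOf (A V) i)

/-- `ρ`-approximation in the public rankings model with publicly known rankings `R`. -/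
def PRApprox {n m : ℕ} (ρ : ℝ) (R : Fin n → Equiv.Perm (Fin m))
    (A : (Fin n → Fin m → ℝ) → (Fin m → Fin n)) : Prop :=
  ∀ V : Fin n → Fin m → ℝ, (∀ i j, 0 ≤ V i j) → (∀ i, Consistent (V i) (R i)) →
    ∀ i : Fin n, ρ * mms n (V i) ≤ bundleVal (V i) (bundleOf (A V) i)

/-- The highest-ranked item of the nonempty set `S` according to the ranking `σ`. -/
def bestItem {m : ℕ} (σ : Equiv.Perm (Fin m)) (S : Finset (Fin m)) (h : S.Nonempty) : Fin m :=
  σ ((S.image σ.symm).min' (h.image σ.symm))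

/-- The (possibly partial) allocation produced by running the picking sequence `seq` on the
remaining items `S`: at each turn the current player of the sequence takes the highest-ranked
remaining item according to her ranking. -/
def pickAllocList {n m : ℕ} (R : Fin n → Equiv.Perm (Fin m)) :
    List (Fin n) → Finset (Fin m) → Fin m → Option (Fin n)
  | [], _ => fun _ => none
  | p :: rest, S =>
    if h : S.Nonempty then
      Function.update (pickAllocList R rest (S.erase (bestItem (R p) S h)))
        (bestItem (R p) S h) (some p)
    else fun _ => none

/-- The mechanism for the ordinal model induced by the picking sequence `seq`. -/
def pickMech {n m : ℕ} (seq : List (Fin n)) (R : Fin n → Equiv.Perm (Fin m)) :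
    Fin m → Option (Fin n) :=
  pickAllocList R seq Finset.univ

/-- The bundle of player `i` in a possibly partial allocation. -/
def obundleOf {n m : ℕ} (alloc : Fin m → Option (Fin n)) (i : Fin n) : Finset (Fin m) :=
  Finset.univ.filter fun j => alloc j = some i

/-- Truthfulness in the ordinal model, for mechanisms producing possibly partial allocations. -/
def OrdTruthfulO {n m : ℕ} (A : (Fin n → Equiv.Perm (Fin m)) → (Fin m → Option (Fin n))) : Prop :=
  ∀ (R : Fin n → Equiv.Perm (Fin m)) (i : Fin n) (v : Fin m → ℝ),
    (∀ j, 0 ≤ v j) → Consistent v (R i) →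
      ∀ σ' : Equiv.Perm (Fin m),
        bundleVal v (obundleOf (A (Function.update R i σ')) i) ≤
          bundleVal v (obundleOf (A R) i)

/-- `ρ`-approximation in the ordinal model, for mechanisms producing possibly partial
allocations. -/
def OrdApproxO {n m : ℕ} (ρ : ℝ)
    (A : (Fin n → Equiv.Perm (Fin m)) → (Fin m → Option (Fin n))) : Prop :=
  ∀ V : Fin n → Fin m → ℝ, (∀ i j, 0 ≤ V i j) →
    ∀ R : Fin n → Equiv.Perm (Fin m), (∀ i, Consistent (V i) (R i)) →
      ∀ i : Fin n, ρ * mms n (V i) ≤ bundleVal (V i) (obundleOf (A R) i)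

/-- Truthfulness in the public rankings model, for mechanisms producing possibly partial
allocations. -/
def PRTruthfulO {n m : ℕ} (R : Fin n → Equiv.Perm (Fin m))
    (A : (Fin n → Fin m → ℝ) → (Fin m → Option (Fin n))) : Prop :=
  ∀ V : Fin n → Fin m → ℝ, (∀ i j, 0 ≤ V i j) → (∀ i, Consistent (V i) (R i)) →
    ∀ (i : Fin n) (v' : Fin m → ℝ), (∀ j, 0 ≤ v' j) → Consistent v' (R i) →
      bundleVal (V i) (obundleOf (A (Function.update V i v')) i) ≤
        bundleVal (V i) (obundleOf (A V) i)

/-- `ρ`-approximation in the public rankings model, for mechanisms producing possibly partial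
allocations. -/
def PRApproxO {n m : ℕ} (ρ : ℝ) (R : Fin n → Equiv.Perm (Fin m))
    (A : (Fin n → Fin m → ℝ) → (Fin m → Option (Fin n))) : Prop :=
  ∀ V : Fin n → Fin m → ℝ, (∀ i j, 0 ≤ V i j) → (∀ i, Consistent (V i) (R i)) →
    ∀ i : Fin n, ρ * mms n (V i) ≤ bundleVal (V i) (obundleOf (A V) i)


noncomputable def rk {m : ℕ} (v : Fin m → ℝ) : Equiv.Perm (Fin m) :=
  Tuple.sort (fun j => -v j)

lemma rk_consistent {m : ℕ} (v : Fin m → ℝ) : Consistent v (rk v) := by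
  intro k l hkl
  have := Tuple.monotone_sort (fun j => -v j) hkl
  simpa [rk] using this

/-- If there exists a truthful `ρ`-approximation mechanism for the ordinal
model, then there exists a truthful `ρ`-approximation mechanism for the cardinal model. -/
theorem stmt1 (n m : ℕ) (ρ : ℝ)
    (h : ∃ A : (Fin n → Equiv.Perm (Fin m)) → (Fin m → Fin n),
      OrdTruthful A ∧ OrdApprox ρ A) :
    ∃ B : (Fin n → Fin m → ℝ) → (Fin m → Fin n),
      CardTruthful B ∧ CardApprox ρ B := by
  obtain ⟨A, hT, hA⟩ := h
  refine ⟨fun V => A (fun i => rk (V i)), ?_, ?_⟩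
  · intro V hV i v' hv'
    have hupd : (fun k => rk (Function.update V i v' k)) =
        Function.update (fun k => rk (V k)) i (rk v') := by
      funext k
      by_cases hk : k = i
      · subst hk; simp
      · simp [Function.update_of_ne hk]
    simp only []
    rw [show (fun i_1 => rk (Function.update V i v' i_1)) = Function.update (fun k => rk (V k)) i (rk v') from hupd]
    exact hT (fun k => rk (V k)) i (V i) (hV i) (rk_consistent (V i)) (rk v')
  · intro V hV i
    exact hA V hV (fun k => rk (V k)) (fun k => rk_consistent (V k)) i
end

section
/- For any n ≥ 2 and m ≥ 1, there exists a truthful mechanism for the cardinal model with n players and m items that is a 1/⌊max{2, m−n+2}/2⌋-approximation. -/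
open Finset

/-! ### Auxiliary development for `stmt2` -/

namespace Stmt2Aux

variable {n m : ℕ}

/-- An item of `S` maximizing `v`. -/
noncomputable def argmaxOn (v : Fin m → ℝ) (S : Finset (Fin m)) (h : S.Nonempty) : Fin m :=
  (S.exists_max_image v h).choose

lemma argmaxOn_mem (v : Fin m → ℝ) (S : Finset (Fin m)) (h : S.Nonempty) :
    argmaxOn v S h ∈ S :=
  (S.exists_max_image v h).choose_spec.1

lemma argmaxOn_le (v : Fin m → ℝ) (S : Finset (Fin m)) (h : S.Nonempty) :
    ∀ j ∈ S, v j ≤ v (argmaxOn v S h) :=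
  (S.exists_max_image v h).choose_spec.2

/-- Remaining items after `k` greedy picks, where the `k`-th pick uses valuation `w k`. -/
noncomputable def remF (w : ℕ → Fin m → ℝ) : ℕ → Finset (Fin m)
  | 0 => Finset.univ
  | k + 1 =>
    if h : (remF w k).Nonempty then (remF w k).erase (argmaxOn (w k) (remF w k) h) else ∅

lemma remF_succ_subset (w : ℕ → Fin m → ℝ) (k : ℕ) : remF w (k + 1) ⊆ remF w k := by
  rw [remF]
  split
  · exact Finset.erase_subset _ _
  · exact Finset.empty_subset _

lemma remF_antitone (w : ℕ → Fin m → ℝ) {k l : ℕ} (h : k ≤ l) : remF w l ⊆ remF w k := by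
  induction l with
  | zero => simpa using (Nat.le_zero.mp h) ▸ Finset.Subset.refl _
  | succ l ih =>
    rcases Nat.lt_or_ge k (l + 1) with hk | hk
    · exact (remF_succ_subset w l).trans (ih (Nat.lt_succ_iff.mp hk))
    · have : k = l + 1 := le_antisymm h hk
      subst this; exact Finset.Subset.refl _

lemma remF_compl_card (w : ℕ → Fin m → ℝ) (k : ℕ) : (remF w k)ᶜ.card ≤ k := by
  induction k with
  | zero => simp [remF]
  | succ k ih =>
    rw [remF]
    split
    · rename_i h
      have hmem := argmaxOn_mem (w k) (remF w k) h
      have hcompl : ((remF w k).erase (argmaxOn (w k) (remF w k) h))ᶜ.card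
          = m - ((remF w k).card - 1) := by
        rw [Finset.card_compl, Finset.card_erase_of_mem hmem, Fintype.card_fin]
      have h1 : (remF w k)ᶜ.card = m - (remF w k).card := by
        rw [Finset.card_compl, Fintype.card_fin]
      have h2 : (remF w k).card ≤ m := by
        simpa using Finset.card_le_card (Finset.subset_univ (remF w k))
      have h3 : 1 ≤ (remF w k).card := Finset.card_pos.mpr h
      omega
    · rename_i h
      have : remF w k = ∅ := Finset.not_nonempty_iff_eq_empty.mp h
      have h1 : (remF w k)ᶜ.card = m := by
        rw [this]; simp
      have h2 : ((∅ : Finset (Fin m))ᶜ).card = m := by simp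
      omega

lemma remF_congr {w w' : ℕ → Fin m → ℝ} (k : ℕ) (h : ∀ k' < k, w k' = w' k') :
    remF w k = remF w' k := by
  induction k with
  | zero => rfl
  | succ k ih =>
    have hk : remF w k = remF w' k := ih fun k' hk' => h k' (Nat.lt_succ_of_lt hk')
    rw [remF, remF, hk, h k (Nat.lt_succ_self k)]

/-- The valuation sequence determined by a valuation matrix. -/
noncomputable def wOf (V : Fin n → Fin m → ℝ) : ℕ → Fin m → ℝ :=
  fun k => if h : k < n then V ⟨k, h⟩ else 0

lemma wOf_eq (V : Fin n → Fin m → ℝ) (i : Fin n) : wOf V i.val = V i := by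
  simp [wOf, i.isLt]

/-- The player receiving item `j`: the first `k` that removes `j`, or `n-1`. -/
noncomputable def owner (n : ℕ) (w : ℕ → Fin m → ℝ) (j : Fin m) : ℕ :=
  Nat.find (⟨n - 1, Or.inl le_rfl⟩ : ∃ k, n - 1 ≤ k ∨ j ∉ remF w (k + 1))

lemma owner_le (w : ℕ → Fin m → ℝ) (j : Fin m) : owner n w j ≤ n - 1 :=
  Nat.find_min' _ (Or.inl le_rfl)

lemma owner_eq_iff (w : ℕ → Fin m → ℝ) (j : Fin m) (i : ℕ) :
    owner n w j = i ↔ (n - 1 ≤ i ∨ j ∉ remF w (i + 1)) ∧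
      ∀ k < i, ¬(n - 1 ≤ k) ∧ j ∈ remF w (k + 1) := by
  rw [owner, Nat.find_eq_iff]
  simp only [not_or, not_not]

lemma owner_eq_small_iff (w : ℕ → Fin m → ℝ) (j : Fin m) {i : ℕ} (hi : i < n - 1) :
    owner n w j = i ↔ j ∈ remF w i ∧ j ∉ remF w (i + 1) := by
  rw [owner_eq_iff]
  constructor
  · rintro ⟨h1, h2⟩
    refine ⟨?_, h1.resolve_left (by omega)⟩
    rcases Nat.eq_zero_or_pos i with h0 | h0
    · subst h0; simp [remF]
    · have := (h2 (i - 1) (by omega)).2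
      have he : i - 1 + 1 = i := by omega
      rwa [he] at this
  · rintro ⟨h1, h2⟩
    refine ⟨Or.inr h2, fun k hk => ⟨by omega, ?_⟩⟩
    exact remF_antitone w (by omega) h1

lemma owner_eq_last_iff (hn : 2 ≤ n) (w : ℕ → Fin m → ℝ) (j : Fin m) :
    owner n w j = n - 1 ↔ j ∈ remF w (n - 1) := by
  rw [owner_eq_iff]
  constructor
  · rintro ⟨_, h2⟩
    have := (h2 (n - 2) (by omega)).2
    have he : n - 2 + 1 = n - 1 := by omega
    rwa [he] at this
  · intro h1
    refine ⟨Or.inl le_rfl, fun k hk => ⟨by omega, ?_⟩⟩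
    exact remF_antitone w (by omega) h1

/-- The mechanism: players `0, …, n-2` greedily pick their favourite remaining item,
player `n-1` receives everything that is left. -/
noncomputable def mech (n m : ℕ) (hn : 0 < n) (V : Fin n → Fin m → ℝ) : Fin m → Fin n :=
  fun j => ⟨owner n (wOf V) j, lt_of_le_of_lt (owner_le _ _) (by omega)⟩

lemma bundle_mech_small (hn : 0 < n) (V : Fin n → Fin m → ℝ) (i : Fin n)
    (hi : i.val < n - 1) :
    bundleOf (mech n m hn V) i = remF (wOf V) i.val \ remF (wOf V) (i.val + 1) := by
  ext j
  simp only [bundleOf, Finset.mem_filter, Finset.mem_univ, true_and, Finset.mem_sdiff,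
    mech, Fin.ext_iff]
  exact owner_eq_small_iff (wOf V) j hi

lemma bundle_mech_last (hn : 2 ≤ n) (V : Fin n → Fin m → ℝ) (i : Fin n)
    (hi : i.val = n - 1) :
    bundleOf (mech n m (by omega) V) i = remF (wOf V) (n - 1) := by
  ext j
  simp only [bundleOf, Finset.mem_filter, Finset.mem_univ, true_and, mech, Fin.ext_iff, hi]
  exact owner_eq_last_iff hn (wOf V) j

lemma sdiff_remF_of_nonempty (w : ℕ → Fin m → ℝ) (k : ℕ) (h : (remF w k).Nonempty) :
    remF w k \ remF w (k + 1) = {argmaxOn (w k) (remF w k) h} := by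
  rw [remF, dif_pos h]
  exact Finset.sdiff_erase_self (argmaxOn_mem _ _ h)

lemma sdiff_remF_of_empty (w : ℕ → Fin m → ℝ) (k : ℕ) (h : ¬(remF w k).Nonempty) :
    remF w k \ remF w (k + 1) = ∅ := by
  rw [Finset.not_nonempty_iff_eq_empty.mp h]
  simp

/-! ### Facts about `mms` -/

lemma bundleVal_nonneg {v : Fin m → ℝ} (hv : ∀ j, 0 ≤ v j) (S : Finset (Fin m)) :
    0 ≤ bundleVal v S :=
  Finset.sum_nonneg fun j _ => hv j

lemma bundleVal_mono {v : Fin m → ℝ} (hv : ∀ j, 0 ≤ v j) {S T : Finset (Fin m)}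
    (h : S ⊆ T) : bundleVal v S ≤ bundleVal v T :=
  Finset.sum_le_sum_of_subset_of_nonneg h fun j _ _ => hv j

lemma mms_nonneg (hn : 0 < n) {v : Fin m → ℝ} (hv : ∀ j, 0 ≤ v j) :
    0 ≤ mms n v := by
  haveI : Nonempty (Fin n) := ⟨⟨0, hn⟩⟩
  haveI : Nonempty (Fin m → Fin n) := ⟨fun _ => ⟨0, hn⟩⟩
  have h0 : ∀ f : Fin m → Fin n, 0 ≤ ⨅ i : Fin n, bundleVal v (bundleOf f i) := fun f =>
    le_ciInf fun i => bundleVal_nonneg hv _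
  rw [mms]
  refine le_trans (h0 (fun _ => ⟨0, hn⟩))
    (le_ciSup (f := fun f : Fin m → Fin n => ⨅ i : Fin n, bundleVal v (bundleOf f i))
      (Set.Finite.bddAbove (Set.finite_range _)) _)

lemma mms_le (hn : 0 < n) {v : Fin m → ℝ} {a : ℝ}
    (h : ∀ f : Fin m → Fin n, ∃ i, bundleVal v (bundleOf f i) ≤ a) :
    mms n v ≤ a := by
  haveI : Nonempty (Fin n) := ⟨⟨0, hn⟩⟩
  haveI : Nonempty (Fin m → Fin n) := ⟨fun _ => ⟨0, hn⟩⟩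
  apply ciSup_le
  intro f
  obtain ⟨i, hi⟩ := h f
  exact ciInf_le_of_le (Set.Finite.bddBelow (Set.finite_range _)) i hi

lemma exists_untouched (hn : 0 < n) (f : Fin m → Fin n) (D : Finset (Fin m))
    (hD : D.card < n) : ∃ i : Fin n, ∀ j ∈ D, f j ≠ i := by
  by_contra hcon
  push_neg at hcon
  have hsub : (Finset.univ : Finset (Fin n)) ⊆ D.image f := by
    intro i _
    obtain ⟨j, hj, hfj⟩ := hcon i
    exact Finset.mem_image.mpr ⟨j, hj, hfj⟩
  have := Finset.card_le_card hsub
  have h2 := Finset.card_image_le (s := D) (f := f)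
  simp only [Finset.card_univ, Fintype.card_fin] at this
  omega

/-- If fewer than `n` items are missing from `S`, then `S` is worth at least the mms. -/
lemma mms_le_compl (hn : 0 < n) {v : Fin m → ℝ} (hv : ∀ j, 0 ≤ v j)
    (S : Finset (Fin m)) (hS : Sᶜ.card < n) : mms n v ≤ bundleVal v S := by
  apply mms_le hn
  intro f
  obtain ⟨i, hi⟩ := exists_untouched hn f Sᶜ hS
  refine ⟨i, bundleVal_mono hv ?_⟩
  intro j hj
  have hfj : f j = i := by
    simpa [bundleOf] using hj
  by_contra hjS
  exact hi j (Finset.mem_compl.mpr hjS) hfj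

lemma arith_lemma (b N M t : ℕ) (hn : 2 ≤ N) (ht : t ≤ N - 2) (htm : t ≤ M)
    (h : (N - t) * b ≤ M - t) : 2 * b ≤ max 2 (M - N + 2) := by
  rcases le_or_gt b 1 with hb | hb
  · exact le_trans (by omega) (le_max_left _ _)
  · refine le_trans ?_ (le_max_right _ _)
    set u := N - t with hu
    set c := b - 2 with hc
    have hu2 : 2 ≤ u := by omega
    have hbc : b = c + 2 := by omega
    have hexp : u * (c + 2) = u * c + u * 2 := Nat.mul_add u c 2
    rw [hbc, hexp] at h
    have huc : 2 * c ≤ u * c := Nat.mul_le_mul_right c hu2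
    have h3 : 2 * c + u * 2 ≤ M - t := le_trans (Nat.add_le_add_right huc _) h
    omega

/-- If at most `n-2` items are missing from `S` and `j⋆` is a best item of `S`, then
`d · v j⋆` is at least the mms, where `d = ⌊max 2 (m-n+2) / 2⌋`. -/
lemma mms_le_small (hn : 2 ≤ n) {v : Fin m → ℝ} (hv : ∀ j, 0 ≤ v j)
    (S : Finset (Fin m)) (hS : Sᶜ.card ≤ n - 2) (jstar : Fin m) (hjS : jstar ∈ S)
    (hmax : ∀ j ∈ S, v j ≤ v jstar) :
    mms n v ≤ ((max 2 (m - n + 2) / 2 : ℕ) : ℝ) * v jstar := by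
  apply mms_le (by omega)
  intro f
  set D := Sᶜ with hD
  set t := D.card with ht
  set U := Finset.univ.filter (fun i : Fin n => ∀ j ∈ D, f j ≠ i) with hU
  have hUcompl : (Finset.univ \ U) ⊆ D.image f := by
    intro i hi
    have hiU : i ∉ U := (Finset.mem_sdiff.mp hi).2
    by_contra him
    apply hiU
    simp only [hU, Finset.mem_filter, Finset.mem_univ, true_and]
    intro j hj hfj
    exact him (Finset.mem_image.mpr ⟨j, hj, hfj⟩)
  have hUcard : n - t ≤ U.card := by
    have h1 := Finset.card_le_card hUcompl
    have h2 := Finset.card_image_le (s := D) (f := f)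
    have h3 : (Finset.univ \ U).card = n - U.card := by
      rw [Finset.card_sdiff_of_subset (Finset.subset_univ U), Finset.card_univ, Fintype.card_fin]
    have h4 : U.card ≤ n := by
      simpa using Finset.card_le_card (Finset.subset_univ U)
    omega
  have hUne : U.Nonempty := Finset.card_pos.mp (by omega)
  obtain ⟨i0, hi0U, hmin⟩ := U.exists_min_image (fun i => (bundleOf f i).card) hUne
  -- the union of untouched bundles is inside S
  have hbU : ∀ i ∈ U, bundleOf f i ⊆ S := by
    intro i hi j hj
    simp only [hU, Finset.mem_filter, Finset.mem_univ, true_and] at hi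
    have hfj : f j = i := by simpa [bundleOf] using hj
    by_contra hjS
    exact hi j (by simp [hD, Finset.mem_compl, hjS]) hfj
  have hdisj : ∀ i ∈ U, ∀ i' ∈ U, i ≠ i' → Disjoint (bundleOf f i) (bundleOf f i') := by
    intro i _ i' _ hne
    rw [Finset.disjoint_left]
    intro j hj hj'
    have h1 : f j = i := by simpa [bundleOf] using hj
    have h2 : f j = i' := by simpa [bundleOf] using hj'
    exact hne (h1 ▸ h2)
  have hsum : ∑ i ∈ U, (bundleOf f i).card = (U.biUnion (bundleOf f)).card :=
    (Finset.card_biUnion hdisj).symm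
  have hsub : U.biUnion (bundleOf f) ⊆ S := by
    intro j hj
    obtain ⟨i, hiU, hji⟩ := Finset.mem_biUnion.mp hj
    exact hbU i hiU hji
  have hScard : S.card = m - t := by
    have := Finset.card_add_card_compl S
    rw [Fintype.card_fin, ← hD] at this
    omega
  have htm : t ≤ m := by
    have : D.card ≤ m := by simpa using Finset.card_le_card (Finset.subset_univ D)
    omega
  have hmul : U.card * (bundleOf f i0).card ≤ m - t := by
    calc U.card * (bundleOf f i0).card = ∑ _i ∈ U, (bundleOf f i0).card := by
          rw [Finset.sum_const, smul_eq_mul]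
      _ ≤ ∑ i ∈ U, (bundleOf f i).card := Finset.sum_le_sum fun i hi => hmin i hi
      _ = (U.biUnion (bundleOf f)).card := hsum
      _ ≤ S.card := Finset.card_le_card hsub
      _ = m - t := hScard
  have hmul2 : (n - t) * (bundleOf f i0).card ≤ m - t :=
    le_trans (Nat.mul_le_mul_right _ hUcard) hmul
  have hb2 : 2 * (bundleOf f i0).card ≤ max 2 (m - n + 2) :=
    arith_lemma _ n m t hn hS htm hmul2
  have hbd : (bundleOf f i0).card ≤ max 2 (m - n + 2) / 2 := by omega
  refine ⟨i0, ?_⟩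
  have hstep : bundleVal v (bundleOf f i0) ≤ ((bundleOf f i0).card : ℝ) * v jstar := by
    have := Finset.sum_le_card_nsmul (bundleOf f i0) v (v jstar)
      (fun j hj => hmax j (hbU i0 hi0U hj))
    simpa [bundleVal, nsmul_eq_mul] using this
  refine hstep.trans ?_
  apply mul_le_mul_of_nonneg_right _ (hv jstar)
  exact_mod_cast hbd

end Stmt2Aux

/-- For any `n ≥ 2` and `m ≥ 1` there is a truthful
`1/⌊max{2, m-n+2}/2⌋`-approximation mechanism for the cardinal model. -/
theorem stmt2 (n m : ℕ) (hn : 2 ≤ n) (hm : 1 ≤ m) :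
    ∃ A : (Fin n → Fin m → ℝ) → (Fin m → Fin n),
      CardTruthful A ∧ CardApprox ((1 : ℝ) / ((max 2 (m - n + 2) / 2 : ℕ) : ℝ)) A := by
  classical
  open Stmt2Aux in
  have hn0 : 0 < n := by omega
  set d : ℕ := max 2 (m - n + 2) / 2 with hd
  have hd1 : 1 ≤ d := by
    have : 2 ≤ max 2 (m - n + 2) := le_max_left _ _
    omega
  have hdR : (1 : ℝ) ≤ (d : ℝ) := by exact_mod_cast hd1
  have hdpos : (0 : ℝ) < (d : ℝ) := lt_of_lt_of_le one_pos hdR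
  have hρpos : (0 : ℝ) ≤ 1 / (d : ℝ) := by positivity
  refine ⟨Stmt2Aux.mech n m hn0, ?_, ?_⟩
  · -- Truthfulness
    intro V hV i v' hv'
    set V' := Function.update V i v' with hV'
    have hw : ∀ k < i.val, wOf V' k = wOf V k := by
      intro k hk
      have hkn : k < n := lt_trans hk i.isLt
      have hne : (⟨k, hkn⟩ : Fin n) ≠ i := Fin.ne_of_val_ne (by simpa using hk.ne)
      simp [wOf, hkn, hV', Function.update_of_ne hne]
    have hrem : ∀ k ≤ i.val, remF (wOf V') k = remF (wOf V) k := by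
      intro k hk
      exact remF_congr k fun k' hk' => hw k' (lt_of_lt_of_le hk' hk)
    rcases lt_or_eq_of_le (Nat.le_sub_one_of_lt i.isLt) with hi | hi
    · -- small player: gets her favourite item of the common remaining set
      rw [bundle_mech_small hn0 V i hi, bundle_mech_small hn0 V' i hi,
        hrem i.val le_rfl]
      set S := remF (wOf V) i.val with hSdef
      by_cases hS : S.Nonempty
      · rw [sdiff_remF_of_nonempty (wOf V) i.val hS]
        have hj' : S \ remF (wOf V') (i.val + 1) ⊆ S := Finset.sdiff_subset
        have key : ∀ j, j ∈ S \ remF (wOf V') (i.val + 1) →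
            V i j ≤ V i (argmaxOn (wOf V i.val) S hS) := by
          intro j hj
          have hjS : j ∈ S := hj' hj
          have := argmaxOn_le (wOf V i.val) S hS j hjS
          rwa [wOf_eq V i] at this ⊢
        have hval : bundleVal (V i) (S \ remF (wOf V') (i.val + 1)) ≤
            ((S \ remF (wOf V') (i.val + 1)).card : ℝ) *
              V i (argmaxOn (wOf V i.val) S hS) := by
          have := Finset.sum_le_card_nsmul (S \ remF (wOf V') (i.val + 1)) (V i)
            (V i (argmaxOn (wOf V i.val) S hS)) key
          simpa [bundleVal, nsmul_eq_mul] using this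
        -- the bundle under V' has at most one element
        have hcard : (S \ remF (wOf V') (i.val + 1)).card ≤ 1 := by
          have h2 : remF (wOf V') (i.val + 1) =
              if h : S.Nonempty then S.erase (argmaxOn (wOf V' i.val) S h) else ∅ := by
            conv_lhs => rw [remF]
            rw [hrem i.val le_rfl]
          rw [h2, dif_pos hS]
          have : S \ S.erase (argmaxOn (wOf V' i.val) S hS) = {argmaxOn (wOf V' i.val) S hS} :=
            Finset.sdiff_erase_self (argmaxOn_mem _ _ hS)
          rw [this]; simp
        have hargnn : 0 ≤ V i (argmaxOn (wOf V i.val) S hS) := hV i _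
        have hvalspec : bundleVal (V i) {argmaxOn (wOf V i.val) S hS} =
            V i (argmaxOn (wOf V i.val) S hS) := by simp [bundleVal]
        rw [hvalspec]
        refine hval.trans ?_
        rcases Nat.eq_zero_or_pos (S \ remF (wOf V') (i.val + 1)).card with h0 | h0
        · rw [h0]; simpa using hargnn
        · have h1 : (S \ remF (wOf V') (i.val + 1)).card = 1 := by omega
          rw [h1]; simp
      · rw [sdiff_remF_of_empty (wOf V) i.val hS]
        have hSe : S = ∅ := Finset.not_nonempty_iff_eq_empty.mp hS
        rw [hSe]
        simp [bundleVal]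
    · -- last player: bundle does not depend on her report
      rw [bundle_mech_last hn V i hi, bundle_mech_last hn V' i hi,
        hrem (n - 1) (by omega)]
  · -- Approximation
    intro V hV i
    have hvnn : ∀ j, 0 ≤ V i j := hV i
    rcases lt_or_eq_of_le (Nat.le_sub_one_of_lt i.isLt) with hi | hi
    · -- small player
      rw [bundle_mech_small hn0 V i hi]
      set S := remF (wOf V) i.val with hSdef
      have hScompl : Sᶜ.card ≤ n - 2 := by
        have := remF_compl_card (wOf V) i.val
        rw [← hSdef] at this
        omega
      by_cases hS : S.Nonempty
      · rw [sdiff_remF_of_nonempty (wOf V) i.val hS, wOf_eq V i]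
        have hjS : argmaxOn (V i) S hS ∈ S := argmaxOn_mem _ _ hS
        have hmax : ∀ j ∈ S, V i j ≤ V i (argmaxOn (V i) S hS) := argmaxOn_le _ _ _
        have hmms := mms_le_small hn hvnn S hScompl _ hjS hmax
        have hvalspec : bundleVal (V i) {argmaxOn (V i) S hS} = V i (argmaxOn (V i) S hS) := by
          simp [bundleVal]
        rw [hvalspec]
        calc (1 : ℝ) / d * mms n (V i) ≤ (1 / d) * ((d : ℝ) * V i (argmaxOn (V i) S hS)) :=
              mul_le_mul_of_nonneg_left hmms hρpos
          _ = V i (argmaxOn (V i) S hS) := by field_simp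
      · rw [sdiff_remF_of_empty (wOf V) i.val hS]
        have hSe : S = ∅ := Finset.not_nonempty_iff_eq_empty.mp hS
        have hmms0 : mms n (V i) ≤ 0 := by
          have := mms_le_compl hn0 hvnn S (by omega)
          rwa [hSe] at this
          -- bundleVal (V i) ∅ = 0
        have hmms0' : mms n (V i) ≤ 0 := by
          simpa [bundleVal] using hmms0
        have : (1 : ℝ) / d * mms n (V i) ≤ 0 := mul_nonpos_of_nonneg_of_nonpos hρpos hmms0'
        simpa [bundleVal] using this
    · -- last player
      rw [bundle_mech_last hn V i hi]
      have hcompl : (remF (wOf V) (n - 1))ᶜ.card < n := by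
        have := remF_compl_card (wOf V) (n - 1)
        omega
      have hmms := mms_le_compl hn0 hvnn (remF (wOf V) (n - 1)) hcompl
      calc (1 : ℝ) / d * mms n (V i) ≤ mms n (V i) :=
            mul_le_of_le_one_left (mms_nonneg hn0 hvnn) (by rw [div_le_one hdpos]; exact hdR)
        _ ≤ _ := hmms
end

section
/- For n = 2 players, m = 4 items, and any ε ∈ (0, 1/2], there is no truthful (1/2 + ε)-approximation mechanism A for the cardinal model with the property that at every valuation matrix V in which each player's valuation vector is a permutation of (2+ε, 1+ε, 1−ε, ε/2) or a permutation of (2−ε, 1+ε, 1−ε, ε/2), the allocation A(V) gives exactly two items to each of the two players. -/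
open Finset

namespace Stmt4Aux

lemma bv_pat (v : Fin 4 → ℝ) (f : Fin 4 → Fin 2) (i : Fin 2) :
    bundleVal v (bundleOf f i) =
      (if f 0 = i then v 0 else 0) + (if f 1 = i then v 1 else 0) +
      (if f 2 = i then v 2 else 0) + (if f 3 = i then v 3 else 0) := by
  rw [bundleVal, bundleOf, Finset.sum_filter, Fin.sum_univ_four]

lemma balanced : ∀ f : Fin 4 → Fin 2, (bundleOf f 0).card = 2 →
    (f 0 = 0 ∧ f 1 = 0 ∧ f 2 = 1 ∧ f 3 = 1) ∨ (f 0 = 0 ∧ f 1 = 1 ∧ f 2 = 0 ∧ f 3 = 1) ∨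
    (f 0 = 0 ∧ f 1 = 1 ∧ f 2 = 1 ∧ f 3 = 0) ∨ (f 0 = 1 ∧ f 1 = 0 ∧ f 2 = 0 ∧ f 3 = 1) ∨
    (f 0 = 1 ∧ f 1 = 0 ∧ f 2 = 1 ∧ f 3 = 0) ∨ (f 0 = 1 ∧ f 1 = 1 ∧ f 2 = 0 ∧ f 3 = 0) := by
  decide

lemma two_le_mms (v : Fin 4 → ℝ) (g : Fin 4 → Fin 2)
    (h0 : 2 ≤ bundleVal v (bundleOf g 0)) (h1 : 2 ≤ bundleVal v (bundleOf g 1)) :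
    2 ≤ mms 2 v := by
  have h : (2:ℝ) ≤ ⨅ i : Fin 2, bundleVal v (bundleOf g i) :=
    le_ciInf (fun i => by fin_cases i <;> assumption)
  refine h.trans ?_
  rw [mms]
  exact le_ciSup (f := fun f : Fin 4 → Fin 2 => ⨅ i : Fin 2, bundleVal v (bundleOf f i))
    (Set.Finite.bddAbove (Set.finite_range _)) g

def pB : Equiv.Perm (Fin 4) := ⟨![0,1,3,2], ![0,1,3,2], by decide, by decide⟩
def pC : Equiv.Perm (Fin 4) := ⟨![1,2,3,0], ![3,0,1,2], by decide, by decide⟩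
def pD : Equiv.Perm (Fin 4) := ⟨![3,0,2,1], ![1,3,2,0], by decide, by decide⟩
def pE : Equiv.Perm (Fin 4) := ⟨![1,0,3,2], ![1,0,3,2], by decide, by decide⟩

noncomputable def rowv (ε : ℝ) (σ : Equiv.Perm (Fin 4)) : Fin 4 → ℝ :=
  fun j => ![2 + ε, 1 + ε, 1 - ε, ε / 2] (σ j)

noncomputable def r0 (ε : ℝ) : Fin 4 → ℝ := rowv ε (Equiv.refl (Fin 4))
noncomputable def r1 (ε : ℝ) : Fin 4 → ℝ := rowv ε pB
noncomputable def r2 (ε : ℝ) : Fin 4 → ℝ := rowv ε pC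
noncomputable def r3 (ε : ℝ) : Fin 4 → ℝ := rowv ε pD
noncomputable def r4 (ε : ℝ) : Fin 4 → ℝ := rowv ε pE

lemma upd0 (u w u' : Fin 4 → ℝ) :
    Function.update (![u, w] : Fin 2 → Fin 4 → ℝ) 0 u' = ![u', w] := by
  funext i
  fin_cases i <;> simp [Function.update]

lemma upd1 (u w w' : Fin 4 → ℝ) :
    Function.update (![u, w] : Fin 2 → Fin 4 → ℝ) 1 w' = ![u, w'] := by
  funext i
  fin_cases i <;> simp [Function.update]

end Stmt4Aux

open Stmt4Aux


set_option maxHeartbeats 2000000 in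
set_option linter.unnecessarySeqFocus false in
/-- For `n = 2`, `m = 4` and any `ε ∈ (0, 1/2]`, there is no truthful
`(1/2 + ε)`-approximation mechanism for the cardinal model that allocates exactly two items to
each player at every instance where each player's valuation vector is a permutation of
`(2+ε, 1+ε, 1-ε, ε/2)` or of `(2-ε, 1+ε, 1-ε, ε/2)`. -/
theorem stmt4 (ε : ℝ) (hε : 0 < ε) (hε' : ε ≤ 1 / 2) :
    ¬ ∃ A : (Fin 2 → Fin 4 → ℝ) → (Fin 4 → Fin 2),
        CardTruthful A ∧ CardApprox (1 / 2 + ε) A ∧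
        ∀ V : Fin 2 → Fin 4 → ℝ,
          (∀ i, ∃ σ : Equiv.Perm (Fin 4),
            (V i = fun j => ![2 + ε, 1 + ε, 1 - ε, ε / 2] (σ j)) ∨
            (V i = fun j => ![2 - ε, 1 + ε, 1 - ε, ε / 2] (σ j))) →
          ∀ i, (bundleOf (A V) i).card = 2 := by

  rintro ⟨A, htr, hap, h22⟩
  have hvnn : ∀ (σ : Equiv.Perm (Fin 4)) (j : Fin 4), 0 ≤ rowv ε σ j := by
    intro σ j
    have h : ∀ k : Fin 4, 0 ≤ ![2 + ε, 1 + ε, 1 - ε, ε / 2] k := by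
      intro k; fin_cases k <;> norm_num <;> linarith
    exact h (σ j)
  have nnA : ∀ i j, 0 ≤ (![r0 ε, r1 ε] : Fin 2 → Fin 4 → ℝ) i j := by
    intro i j; fin_cases i
    · exact hvnn (Equiv.refl (Fin 4)) j
    · exact hvnn pB j
  have nnB : ∀ i j, 0 ≤ (![r0 ε, r2 ε] : Fin 2 → Fin 4 → ℝ) i j := by
    intro i j; fin_cases i
    · exact hvnn (Equiv.refl (Fin 4)) j
    · exact hvnn pC j
  have nnC : ∀ i j, 0 ≤ (![r1 ε, r2 ε] : Fin 2 → Fin 4 → ℝ) i j := by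
    intro i j; fin_cases i
    · exact hvnn pB j
    · exact hvnn pC j
  have nnD : ∀ i j, 0 ≤ (![r1 ε, r3 ε] : Fin 2 → Fin 4 → ℝ) i j := by
    intro i j; fin_cases i
    · exact hvnn pB j
    · exact hvnn pD j
  have nnE : ∀ i j, 0 ≤ (![r4 ε, r3 ε] : Fin 2 → Fin 4 → ℝ) i j := by
    intro i j; fin_cases i
    · exact hvnn pE j
    · exact hvnn pD j
  have pmA : ∀ i : Fin 2, ∃ σ : Equiv.Perm (Fin 4),
      ((![r0 ε, r1 ε] : Fin 2 → Fin 4 → ℝ) i = fun j => ![2 + ε, 1 + ε, 1 - ε, ε / 2] (σ j)) ∨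
      ((![r0 ε, r1 ε] : Fin 2 → Fin 4 → ℝ) i = fun j => ![2 - ε, 1 + ε, 1 - ε, ε / 2] (σ j)) := by
    intro i; fin_cases i
    · exact ⟨(Equiv.refl (Fin 4)), Or.inl rfl⟩
    · exact ⟨pB, Or.inl rfl⟩
  have pmB : ∀ i : Fin 2, ∃ σ : Equiv.Perm (Fin 4),
      ((![r0 ε, r2 ε] : Fin 2 → Fin 4 → ℝ) i = fun j => ![2 + ε, 1 + ε, 1 - ε, ε / 2] (σ j)) ∨
      ((![r0 ε, r2 ε] : Fin 2 → Fin 4 → ℝ) i = fun j => ![2 - ε, 1 + ε, 1 - ε, ε / 2] (σ j)) := by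
    intro i; fin_cases i
    · exact ⟨(Equiv.refl (Fin 4)), Or.inl rfl⟩
    · exact ⟨pC, Or.inl rfl⟩
  have pmC : ∀ i : Fin 2, ∃ σ : Equiv.Perm (Fin 4),
      ((![r1 ε, r2 ε] : Fin 2 → Fin 4 → ℝ) i = fun j => ![2 + ε, 1 + ε, 1 - ε, ε / 2] (σ j)) ∨
      ((![r1 ε, r2 ε] : Fin 2 → Fin 4 → ℝ) i = fun j => ![2 - ε, 1 + ε, 1 - ε, ε / 2] (σ j)) := by
    intro i; fin_cases i
    · exact ⟨pB, Or.inl rfl⟩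
    · exact ⟨pC, Or.inl rfl⟩
  have pmD : ∀ i : Fin 2, ∃ σ : Equiv.Perm (Fin 4),
      ((![r1 ε, r3 ε] : Fin 2 → Fin 4 → ℝ) i = fun j => ![2 + ε, 1 + ε, 1 - ε, ε / 2] (σ j)) ∨
      ((![r1 ε, r3 ε] : Fin 2 → Fin 4 → ℝ) i = fun j => ![2 - ε, 1 + ε, 1 - ε, ε / 2] (σ j)) := by
    intro i; fin_cases i
    · exact ⟨pB, Or.inl rfl⟩
    · exact ⟨pD, Or.inl rfl⟩
  have pmE : ∀ i : Fin 2, ∃ σ : Equiv.Perm (Fin 4),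
      ((![r4 ε, r3 ε] : Fin 2 → Fin 4 → ℝ) i = fun j => ![2 + ε, 1 + ε, 1 - ε, ε / 2] (σ j)) ∨
      ((![r4 ε, r3 ε] : Fin 2 → Fin 4 → ℝ) i = fun j => ![2 - ε, 1 + ε, 1 - ε, ε / 2] (σ j)) := by
    intro i; fin_cases i
    · exact ⟨pE, Or.inl rfl⟩
    · exact ⟨pD, Or.inl rfl⟩
  have cA := h22 ![r0 ε, r1 ε] pmA 0
  have cB := h22 ![r0 ε, r2 ε] pmB 0
  have cC := h22 ![r1 ε, r2 ε] pmC 0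
  have cD := h22 ![r1 ε, r3 ε] pmD 0
  have cE := h22 ![r4 ε, r3 ε] pmE 0
  have mm0 : (2:ℝ) ≤ mms 2 (r0 ε) := by
    refine two_le_mms _ ![0,1,1,0] ?_ ?_ <;>
      · rw [bv_pat]; norm_num [r0, r1, r2, r3, r4, rowv, pB, pC, pD, pE, Matrix.cons_val_two, Matrix.cons_val_three] <;> linarith
  have mm1 : (2:ℝ) ≤ mms 2 (r1 ε) := by
    refine two_le_mms _ ![0,1,0,1] ?_ ?_ <;>
      · rw [bv_pat]; norm_num [r0, r1, r2, r3, r4, rowv, pB, pC, pD, pE, Matrix.cons_val_two, Matrix.cons_val_three] <;> linarith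
  have mm2 : (2:ℝ) ≤ mms 2 (r2 ε) := by
    refine two_le_mms _ ![1,1,0,0] ?_ ?_ <;>
      · rw [bv_pat]; norm_num [r0, r1, r2, r3, r4, rowv, pB, pC, pD, pE, Matrix.cons_val_two, Matrix.cons_val_three] <;> linarith
  have mm3 : (2:ℝ) ≤ mms 2 (r3 ε) := by
    refine two_le_mms _ ![0,0,1,1] ?_ ?_ <;>
      · rw [bv_pat]; norm_num [r0, r1, r2, r3, r4, rowv, pB, pC, pD, pE, Matrix.cons_val_two, Matrix.cons_val_three] <;> linarith
  have mm4 : (2:ℝ) ≤ mms 2 (r4 ε) := by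
    refine two_le_mms _ ![1,0,0,1] ?_ ?_ <;>
      · rw [bv_pat]; norm_num [r0, r1, r2, r3, r4, rowv, pB, pC, pD, pE, Matrix.cons_val_two, Matrix.cons_val_three] <;> linarith
  have HA0 : 1 + 2*ε ≤ bundleVal (r0 ε) (bundleOf (A ![r0 ε, r1 ε]) 0) := by
    have h := hap ![r0 ε, r1 ε] nnA 0
    simp only [Matrix.cons_val_zero] at h
    linarith [mul_le_mul_of_nonneg_left mm0 (by linarith : (0:ℝ) ≤ 1/2 + ε), h]
  have HA1 : 1 + 2*ε ≤ bundleVal (r1 ε) (bundleOf (A ![r0 ε, r1 ε]) 1) := by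
    have h := hap ![r0 ε, r1 ε] nnA 1
    simp only [Matrix.cons_val_one, Matrix.head_cons, Matrix.cons_val_zero] at h
    linarith [mul_le_mul_of_nonneg_left mm1 (by linarith : (0:ℝ) ≤ 1/2 + ε), h]
  have HB0 : 1 + 2*ε ≤ bundleVal (r0 ε) (bundleOf (A ![r0 ε, r2 ε]) 0) := by
    have h := hap ![r0 ε, r2 ε] nnB 0
    simp only [Matrix.cons_val_zero] at h
    linarith [mul_le_mul_of_nonneg_left mm0 (by linarith : (0:ℝ) ≤ 1/2 + ε), h]
  have HB1 : 1 + 2*ε ≤ bundleVal (r2 ε) (bundleOf (A ![r0 ε, r2 ε]) 1) := by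
    have h := hap ![r0 ε, r2 ε] nnB 1
    simp only [Matrix.cons_val_one, Matrix.head_cons, Matrix.cons_val_zero] at h
    linarith [mul_le_mul_of_nonneg_left mm2 (by linarith : (0:ℝ) ≤ 1/2 + ε), h]
  have HC0 : 1 + 2*ε ≤ bundleVal (r1 ε) (bundleOf (A ![r1 ε, r2 ε]) 0) := by
    have h := hap ![r1 ε, r2 ε] nnC 0
    simp only [Matrix.cons_val_zero] at h
    linarith [mul_le_mul_of_nonneg_left mm1 (by linarith : (0:ℝ) ≤ 1/2 + ε), h]
  have HC1 : 1 + 2*ε ≤ bundleVal (r2 ε) (bundleOf (A ![r1 ε, r2 ε]) 1) := by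
    have h := hap ![r1 ε, r2 ε] nnC 1
    simp only [Matrix.cons_val_one, Matrix.head_cons, Matrix.cons_val_zero] at h
    linarith [mul_le_mul_of_nonneg_left mm2 (by linarith : (0:ℝ) ≤ 1/2 + ε), h]
  have HD0 : 1 + 2*ε ≤ bundleVal (r1 ε) (bundleOf (A ![r1 ε, r3 ε]) 0) := by
    have h := hap ![r1 ε, r3 ε] nnD 0
    simp only [Matrix.cons_val_zero] at h
    linarith [mul_le_mul_of_nonneg_left mm1 (by linarith : (0:ℝ) ≤ 1/2 + ε), h]
  have HD1 : 1 + 2*ε ≤ bundleVal (r3 ε) (bundleOf (A ![r1 ε, r3 ε]) 1) := by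
    have h := hap ![r1 ε, r3 ε] nnD 1
    simp only [Matrix.cons_val_one, Matrix.head_cons, Matrix.cons_val_zero] at h
    linarith [mul_le_mul_of_nonneg_left mm3 (by linarith : (0:ℝ) ≤ 1/2 + ε), h]
  have HE0 : 1 + 2*ε ≤ bundleVal (r4 ε) (bundleOf (A ![r4 ε, r3 ε]) 0) := by
    have h := hap ![r4 ε, r3 ε] nnE 0
    simp only [Matrix.cons_val_zero] at h
    linarith [mul_le_mul_of_nonneg_left mm4 (by linarith : (0:ℝ) ≤ 1/2 + ε), h]
  have HE1 : 1 + 2*ε ≤ bundleVal (r3 ε) (bundleOf (A ![r4 ε, r3 ε]) 1) := by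
    have h := hap ![r4 ε, r3 ε] nnE 1
    simp only [Matrix.cons_val_one, Matrix.head_cons, Matrix.cons_val_zero] at h
    linarith [mul_le_mul_of_nonneg_left mm3 (by linarith : (0:ℝ) ≤ 1/2 + ε), h]
  have TBA2 : bundleVal (r2 ε) (bundleOf (A ![r0 ε, r1 ε]) 1) ≤ bundleVal (r2 ε) (bundleOf (A ![r0 ε, r2 ε]) 1) := by
    have h := htr ![r0 ε, r2 ε] nnB 1 (r1 ε) (fun j => hvnn pB j)
    rw [upd1] at h
    simpa only [Matrix.cons_val_one, Matrix.head_cons, Matrix.cons_val_zero] using h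
  have TBC1 : bundleVal (r0 ε) (bundleOf (A ![r1 ε, r2 ε]) 0) ≤ bundleVal (r0 ε) (bundleOf (A ![r0 ε, r2 ε]) 0) := by
    have h := htr ![r0 ε, r2 ε] nnB 0 (r1 ε) (fun j => hvnn pB j)
    rw [upd0] at h
    simpa only [Matrix.cons_val_zero] using h
  have TDC2 : bundleVal (r3 ε) (bundleOf (A ![r1 ε, r2 ε]) 1) ≤ bundleVal (r3 ε) (bundleOf (A ![r1 ε, r3 ε]) 1) := by
    have h := htr ![r1 ε, r3 ε] nnD 1 (r2 ε) (fun j => hvnn pC j)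
    rw [upd1] at h
    simpa only [Matrix.cons_val_one, Matrix.head_cons, Matrix.cons_val_zero] using h
  have TDE1 : bundleVal (r1 ε) (bundleOf (A ![r4 ε, r3 ε]) 0) ≤ bundleVal (r1 ε) (bundleOf (A ![r1 ε, r3 ε]) 0) := by
    have h := htr ![r1 ε, r3 ε] nnD 0 (r4 ε) (fun j => hvnn pE j)
    rw [upd0] at h
    simpa only [Matrix.cons_val_zero] using h
  have hA : (A ![r0 ε, r1 ε] 0 = 0 ∧ A ![r0 ε, r1 ε] 1 = 1 ∧ A ![r0 ε, r1 ε] 2 = 0 ∧ A ![r0 ε, r1 ε] 3 = 1) ∨ (A ![r0 ε, r1 ε] 0 = 1 ∧ A ![r0 ε, r1 ε] 1 = 0 ∧ A ![r0 ε, r1 ε] 2 = 0 ∧ A ![r0 ε, r1 ε] 3 = 1) := by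
    rcases balanced (A ![r0 ε, r1 ε]) cA with ⟨h0,h1,h2,h3⟩|h|⟨h0,h1,h2,h3⟩|h|⟨h0,h1,h2,h3⟩|⟨h0,h1,h2,h3⟩
    · rw [bv_pat, h0, h1, h2, h3] at HA1
      norm_num [r0, r1, r2, r3, r4, rowv, pB, pC, pD, pE, Matrix.cons_val_two, Matrix.cons_val_three] at HA1 <;> linarith
    · exact Or.inl h
    · rw [bv_pat, h0, h1, h2, h3] at HA1
      norm_num [r0, r1, r2, r3, r4, rowv, pB, pC, pD, pE, Matrix.cons_val_two, Matrix.cons_val_three] at HA1 <;> linarith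
    · exact Or.inr h
    · rw [bv_pat, h0, h1, h2, h3] at HA0
      norm_num [r0, r1, r2, r3, r4, rowv, pB, pC, pD, pE, Matrix.cons_val_two, Matrix.cons_val_three] at HA0 <;> linarith
    · rw [bv_pat, h0, h1, h2, h3] at HA0
      norm_num [r0, r1, r2, r3, r4, rowv, pB, pC, pD, pE, Matrix.cons_val_two, Matrix.cons_val_three] at HA0 <;> linarith
  have hC0 : (A ![r1 ε, r2 ε] 0 = 0 ∧ A ![r1 ε, r2 ε] 1 = 0 ∧ A ![r1 ε, r2 ε] 2 = 1 ∧ A ![r1 ε, r2 ε] 3 = 1) ∨ (A ![r1 ε, r2 ε] 0 = 0 ∧ A ![r1 ε, r2 ε] 1 = 1 ∧ A ![r1 ε, r2 ε] 2 = 0 ∧ A ![r1 ε, r2 ε] 3 = 1) := by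
    rcases balanced (A ![r1 ε, r2 ε]) cC with h|h|⟨h0,h1,h2,h3⟩|⟨h0,h1,h2,h3⟩|⟨h0,h1,h2,h3⟩|⟨h0,h1,h2,h3⟩
    · exact Or.inl h
    · exact Or.inr h
    · rw [bv_pat, h0, h1, h2, h3] at HC1
      norm_num [r0, r1, r2, r3, r4, rowv, pB, pC, pD, pE, Matrix.cons_val_two, Matrix.cons_val_three] at HC1 <;> linarith
    · rw [bv_pat, h0, h1, h2, h3] at HC0
      norm_num [r0, r1, r2, r3, r4, rowv, pB, pC, pD, pE, Matrix.cons_val_two, Matrix.cons_val_three] at HC0 <;> linarith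
    · rw [bv_pat, h0, h1, h2, h3] at HC1
      norm_num [r0, r1, r2, r3, r4, rowv, pB, pC, pD, pE, Matrix.cons_val_two, Matrix.cons_val_three] at HC1 <;> linarith
    · rw [bv_pat, h0, h1, h2, h3] at HC0
      norm_num [r0, r1, r2, r3, r4, rowv, pB, pC, pD, pE, Matrix.cons_val_two, Matrix.cons_val_three] at HC0 <;> linarith
  have hB : A ![r0 ε, r2 ε] 0 = 0 ∧ A ![r0 ε, r2 ε] 1 = 1 ∧ A ![r0 ε, r2 ε] 2 = 0 ∧ A ![r0 ε, r2 ε] 3 = 1 := by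
    rcases balanced (A ![r0 ε, r2 ε]) cB with ⟨h0,h1,h2,h3⟩|h|⟨h0,h1,h2,h3⟩|⟨h0,h1,h2,h3⟩|⟨h0,h1,h2,h3⟩|⟨h0,h1,h2,h3⟩
    · rcases hA with ⟨g0,g1,g2,g3⟩|⟨g0,g1,g2,g3⟩ <;>
        · rw [bv_pat, g0, g1, g2, g3] at TBA2
          rw [bv_pat, h0, h1, h2, h3] at TBA2
          norm_num [r0, r1, r2, r3, r4, rowv, pB, pC, pD, pE, Matrix.cons_val_two, Matrix.cons_val_three] at TBA2 <;> linarith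
    · exact h
    · rw [bv_pat, h0, h1, h2, h3] at HB1
      norm_num [r0, r1, r2, r3, r4, rowv, pB, pC, pD, pE, Matrix.cons_val_two, Matrix.cons_val_three] at HB1 <;> linarith
    · rcases hC0 with ⟨g0,g1,g2,g3⟩|⟨g0,g1,g2,g3⟩ <;>
        · rw [bv_pat, g0, g1, g2, g3] at TBC1
          rw [bv_pat, h0, h1, h2, h3] at TBC1
          norm_num [r0, r1, r2, r3, r4, rowv, pB, pC, pD, pE, Matrix.cons_val_two, Matrix.cons_val_three] at TBC1 <;> linarith
    · rw [bv_pat, h0, h1, h2, h3] at HB0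
      norm_num [r0, r1, r2, r3, r4, rowv, pB, pC, pD, pE, Matrix.cons_val_two, Matrix.cons_val_three] at HB0 <;> linarith
    · rw [bv_pat, h0, h1, h2, h3] at HB0
      norm_num [r0, r1, r2, r3, r4, rowv, pB, pC, pD, pE, Matrix.cons_val_two, Matrix.cons_val_three] at HB0 <;> linarith
  have hC : A ![r1 ε, r2 ε] 0 = 0 ∧ A ![r1 ε, r2 ε] 1 = 1 ∧ A ![r1 ε, r2 ε] 2 = 0 ∧ A ![r1 ε, r2 ε] 3 = 1 := by
    rcases hC0 with ⟨h0,h1,h2,h3⟩|h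
    · obtain ⟨g0,g1,g2,g3⟩ := hB
      rw [bv_pat, h0, h1, h2, h3] at TBC1
      rw [bv_pat, g0, g1, g2, g3] at TBC1
      norm_num [r0, r1, r2, r3, r4, rowv, pB, pC, pD, pE, Matrix.cons_val_two, Matrix.cons_val_three] at TBC1 <;> linarith
    · exact h
  have hD : A ![r1 ε, r3 ε] 0 = 0 ∧ A ![r1 ε, r3 ε] 1 = 1 ∧ A ![r1 ε, r3 ε] 2 = 0 ∧ A ![r1 ε, r3 ε] 3 = 1 := by
    rcases balanced (A ![r1 ε, r3 ε]) cD with ⟨h0,h1,h2,h3⟩|h|⟨h0,h1,h2,h3⟩|⟨h0,h1,h2,h3⟩|⟨h0,h1,h2,h3⟩|⟨h0,h1,h2,h3⟩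
    · obtain ⟨g0,g1,g2,g3⟩ := hC
      rw [bv_pat, g0, g1, g2, g3] at TDC2
      rw [bv_pat, h0, h1, h2, h3] at TDC2
      norm_num [r0, r1, r2, r3, r4, rowv, pB, pC, pD, pE, Matrix.cons_val_two, Matrix.cons_val_three] at TDC2 <;> linarith
    · exact h
    · obtain ⟨g0,g1,g2,g3⟩ := hC
      rw [bv_pat, g0, g1, g2, g3] at TDC2
      rw [bv_pat, h0, h1, h2, h3] at TDC2
      norm_num [r0, r1, r2, r3, r4, rowv, pB, pC, pD, pE, Matrix.cons_val_two, Matrix.cons_val_three] at TDC2 <;> linarith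
    · rw [bv_pat, h0, h1, h2, h3] at HD0
      norm_num [r0, r1, r2, r3, r4, rowv, pB, pC, pD, pE, Matrix.cons_val_two, Matrix.cons_val_three] at HD0 <;> linarith
    · rw [bv_pat, h0, h1, h2, h3] at HD1
      norm_num [r0, r1, r2, r3, r4, rowv, pB, pC, pD, pE, Matrix.cons_val_two, Matrix.cons_val_three] at HD1 <;> linarith
    · rw [bv_pat, h0, h1, h2, h3] at HD0
      norm_num [r0, r1, r2, r3, r4, rowv, pB, pC, pD, pE, Matrix.cons_val_two, Matrix.cons_val_three] at HD0 <;> linarith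
  obtain ⟨g0,g1,g2,g3⟩ := hD
  rcases balanced (A ![r4 ε, r3 ε]) cE with ⟨h0,h1,h2,h3⟩|⟨h0,h1,h2,h3⟩|⟨h0,h1,h2,h3⟩|⟨h0,h1,h2,h3⟩|⟨h0,h1,h2,h3⟩|⟨h0,h1,h2,h3⟩
  · rw [bv_pat, h0, h1, h2, h3] at TDE1
    rw [bv_pat, g0, g1, g2, g3] at TDE1
    norm_num [r0, r1, r2, r3, r4, rowv, pB, pC, pD, pE, Matrix.cons_val_two, Matrix.cons_val_three] at TDE1 <;> linarith
  · rw [bv_pat, h0, h1, h2, h3] at HE0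
    norm_num [r0, r1, r2, r3, r4, rowv, pB, pC, pD, pE, Matrix.cons_val_two, Matrix.cons_val_three] at HE0 <;> linarith
  · rw [bv_pat, h0, h1, h2, h3] at TDE1
    rw [bv_pat, g0, g1, g2, g3] at TDE1
    norm_num [r0, r1, r2, r3, r4, rowv, pB, pC, pD, pE, Matrix.cons_val_two, Matrix.cons_val_three] at TDE1 <;> linarith
  · rw [bv_pat, h0, h1, h2, h3] at HE1
    norm_num [r0, r1, r2, r3, r4, rowv, pB, pC, pD, pE, Matrix.cons_val_two, Matrix.cons_val_three] at HE1 <;> linarith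
  · rw [bv_pat, h0, h1, h2, h3] at HE1
    norm_num [r0, r1, r2, r3, r4, rowv, pB, pC, pD, pE, Matrix.cons_val_two, Matrix.cons_val_three] at HE1 <;> linarith
  · rw [bv_pat, h0, h1, h2, h3] at HE0
    norm_num [r0, r1, r2, r3, r4, rowv, pB, pC, pD, pE, Matrix.cons_val_two, Matrix.cons_val_three] at HE0 <;> linarith
end

section
/- For any n ≥ 2 and m ≥ n + 2, the mechanism for the ordinal model induced by the picking sequence in which players 1, 2, …, n−1 each pick one item in turn and then player n takes all remaining m − n + 1 items (i.e., the sequence p_1 p_2 … p_{n−1} p_n p_n … p_n of length m) is truthful and is a 1/⌊(m−n+2)/2⌋-approximation. -/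
open Finset

/-- The picking sequence `p₁ p₂ … p_{n-1} pₙ pₙ … pₙ` of length `m`: players `1, …, n-1` pick one
item each in turn, and player `n` takes all the remaining items. -/
def lastDictSeq (n m : ℕ) (hn : 0 < n) : List (Fin n) :=
  (List.range m).map fun t => ⟨min t (n - 1), by omega⟩

section Stmt6Aux

open Finset

variable {n m : ℕ}

lemma bestItem_mem {σ : Equiv.Perm (Fin m)} {S : Finset (Fin m)} (h : S.Nonempty) :
    bestItem σ S h ∈ S := by
  have h1 := Finset.min'_mem (S.image σ.symm) (h.image σ.symm)
  rcases Finset.mem_image.1 h1 with ⟨j, hj, hje⟩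
  unfold bestItem
  rw [← hje, Equiv.apply_symm_apply]
  exact hj

lemma bestItem_best {σ : Equiv.Perm (Fin m)} {S : Finset (Fin m)} (h : S.Nonempty)
    {v : Fin m → ℝ} (hv : Consistent v σ) {j : Fin m} (hj : j ∈ S) :
    v j ≤ v (bestItem σ S h) := by
  have hmem : σ.symm j ∈ S.image σ.symm := Finset.mem_image_of_mem _ hj
  have hle := Finset.min'_le _ _ hmem
  have h2 := hv _ _ hle
  unfold bestItem
  rwa [Equiv.apply_symm_apply] at h2

lemma pickAllocList_empty (R : Fin n → Equiv.Perm (Fin m)) (seq : List (Fin n)) :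
    pickAllocList R seq (∅ : Finset (Fin m)) = fun _ => none := by
  cases seq with
  | nil => rfl
  | cons p rest => simp [pickAllocList]

lemma pickAllocList_mem {R : Fin n → Equiv.Perm (Fin m)} {seq : List (Fin n)}
    {S : Finset (Fin m)} {j : Fin m} {i : Fin n}
    (h : pickAllocList R seq S j = some i) : j ∈ S := by
  induction seq generalizing S with
  | nil => simp [pickAllocList] at h
  | cons p rest ih =>
    simp only [pickAllocList] at h
    by_cases hS : S.Nonempty
    · rw [dif_pos hS] at h
      by_cases hj : j = bestItem (R p) S hS
      · exact hj ▸ bestItem_mem hS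
      · rw [Function.update_of_ne hj] at h
        exact Finset.mem_of_mem_erase (ih h)
    · rw [dif_neg hS] at h; simp at h

lemma pickAllocList_not_mem {R : Fin n → Equiv.Perm (Fin m)} {seq : List (Fin n)}
    {S : Finset (Fin m)} {j : Fin m} {i : Fin n}
    (hi : i ∉ seq) : pickAllocList R seq S j ≠ some i := by
  induction seq generalizing S with
  | nil => simp [pickAllocList]
  | cons p rest ih =>
    have hpi : p ≠ i := by rintro rfl; exact hi (List.mem_cons_self)
    have hrest : i ∉ rest := fun hh => hi (List.mem_cons_of_mem _ hh)
    simp only [pickAllocList]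
    by_cases hS : S.Nonempty
    · rw [dif_pos hS]
      by_cases hj : j = bestItem (R p) S hS
      · subst hj; rw [Function.update_self]; simp [hpi]
      · rw [Function.update_of_ne hj]; exact ih hrest
    · rw [dif_neg hS]; simp

lemma obundleOf_update_self (f : Fin m → Option (Fin n)) (b : Fin m) (i : Fin n) :
    obundleOf (Function.update f b (some i)) i = insert b (obundleOf f i) := by
  ext j
  simp only [obundleOf, Finset.mem_filter, Finset.mem_univ, true_and, Finset.mem_insert,
    Function.update_apply]
  by_cases hj : j = b <;> simp [hj]

lemma obundleOf_update_other (f : Fin m → Option (Fin n)) (b : Fin m) {p i : Fin n}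
    (hpi : p ≠ i) :
    obundleOf (Function.update f b (some p)) i = (obundleOf f i).erase b := by
  ext j
  simp only [obundleOf, Finset.mem_filter, Finset.mem_univ, true_and, Finset.mem_erase,
    Function.update_apply]
  by_cases hj : j = b <;> simp [hj, hpi]

lemma obundleOf_not_mem {R : Fin n → Equiv.Perm (Fin m)} {seq : List (Fin n)}
    {S : Finset (Fin m)} {i : Fin n} (hi : i ∉ seq) :
    obundleOf (pickAllocList R seq S) i = ∅ := by
  ext j
  simp only [obundleOf, Finset.mem_filter, Finset.mem_univ, true_and, Finset.notMem_empty,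
    iff_false]
  exact pickAllocList_not_mem hi

lemma obundleOf_none (i : Fin n) :
    obundleOf (fun _ : Fin m => (none : Option (Fin n))) i = ∅ := by
  ext j; simp [obundleOf]

def rem (R : Fin n → Equiv.Perm (Fin m)) : List (Fin n) → Finset (Fin m) → Finset (Fin m)
  | [], S => S
  | p :: L, S => if h : S.Nonempty then rem R L (S.erase (bestItem (R p) S h)) else S

lemma rem_subset (R : Fin n → Equiv.Perm (Fin m)) (L : List (Fin n)) (S : Finset (Fin m)) :
    rem R L S ⊆ S := by
  induction L generalizing S with
  | nil => exact subset_rfl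
  | cons p L ih =>
    simp only [rem]
    by_cases hS : S.Nonempty
    · rw [dif_pos hS]; exact (ih _).trans (Finset.erase_subset _ _)
    · rw [dif_neg hS]

lemma rem_card_le (R : Fin n → Equiv.Perm (Fin m)) (L : List (Fin n)) (S : Finset (Fin m)) :
    (rem R L S).card ≤ S.card - L.length := by
  induction L generalizing S with
  | nil => simp [rem]
  | cons p L ih =>
    simp only [rem, List.length_cons]
    by_cases hS : S.Nonempty
    · rw [dif_pos hS]
      have h1 := ih (S.erase (bestItem (R p) S hS))
      rw [Finset.card_erase_of_mem (bestItem_mem hS)] at h1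
      omega
    · rw [dif_neg hS]
      have : S = ∅ := Finset.not_nonempty_iff_eq_empty.1 hS
      simp [this]

lemma rem_card_ge (R : Fin n → Equiv.Perm (Fin m)) (L : List (Fin n)) (S : Finset (Fin m)) :
    S.card - L.length ≤ (rem R L S).card := by
  induction L generalizing S with
  | nil => simp [rem]
  | cons p L ih =>
    simp only [rem, List.length_cons]
    by_cases hS : S.Nonempty
    · rw [dif_pos hS]
      have h1 := ih (S.erase (bestItem (R p) S hS))
      rw [Finset.card_erase_of_mem (bestItem_mem hS)] at h1
      omega
    · rw [dif_neg hS]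
      have : S = ∅ := Finset.not_nonempty_iff_eq_empty.1 hS
      simp [this]

lemma rem_congr (R R' : Fin n → Equiv.Perm (Fin m)) :
    ∀ (L : List (Fin n)) (S : Finset (Fin m)), (∀ p ∈ L, R p = R' p) →
      rem R L S = rem R' L S := by
  intro L
  induction L with
  | nil => intro S _; rfl
  | cons p L ih =>
    intro S h
    have h1 : R p = R' p := h p (List.mem_cons_self)
    simp only [rem]
    by_cases hS : S.Nonempty
    · rw [dif_pos hS, dif_pos hS, h1]
      exact ih _ (fun q hq => h q (List.mem_cons_of_mem _ hq))
    · rw [dif_neg hS, dif_neg hS]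

lemma obundle_append {R : Fin n → Equiv.Perm (Fin m)} {i : Fin n} :
    ∀ (L T : List (Fin n)) (S : Finset (Fin m)), i ∉ L →
      obundleOf (pickAllocList R (L ++ T) S) i
        = obundleOf (pickAllocList R T (rem R L S)) i := by
  intro L
  induction L with
  | nil => intro T S _; rfl
  | cons p L ih =>
    intro T S hiL
    have hpi : p ≠ i := by rintro rfl; exact hiL (List.mem_cons_self)
    have hL : i ∉ L := fun hh => hiL (List.mem_cons_of_mem _ hh)
    rw [List.cons_append]
    simp only [pickAllocList, rem]
    by_cases hS : S.Nonempty
    · rw [dif_pos hS, dif_pos hS, obundleOf_update_other _ _ hpi, ih T _ hL]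
      apply Finset.erase_eq_of_notMem
      intro hb
      have hb2 := pickAllocList_mem ((Finset.mem_filter.1 hb).2)
      have hb3 := rem_subset R L _ hb2
      exact (Finset.notMem_erase _ _) hb3
    · rw [dif_neg hS, dif_neg hS]
      have hSe : S = ∅ := Finset.not_nonempty_iff_eq_empty.1 hS
      subst hSe
      rw [pickAllocList_empty]

lemma replicate_bundle (R : Fin n → Equiv.Perm (Fin m)) (q : Fin n) :
    ∀ (k : ℕ) (S : Finset (Fin m)), S.card ≤ k →
      obundleOf (pickAllocList R (List.replicate k q) S) q = S := by
  intro k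
  induction k with
  | zero =>
    intro S h
    have hS : S = ∅ := Finset.card_eq_zero.1 (Nat.le_zero.1 h)
    subst hS
    rw [pickAllocList_empty]
    exact obundleOf_none q
  | succ k ih =>
    intro S h
    by_cases hS : S.Nonempty
    · rw [List.replicate_succ]
      simp only [pickAllocList]
      rw [dif_pos hS, obundleOf_update_self, ih _ (by
        rw [Finset.card_erase_of_mem (bestItem_mem hS)]; omega)]
      exact Finset.insert_erase (bestItem_mem hS)
    · have hSe : S = ∅ := Finset.not_nonempty_iff_eq_empty.1 hS
      subst hSe
      rw [pickAllocList_empty]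
      exact obundleOf_none q

lemma singleton_bundle {R : Fin n → Equiv.Perm (Fin m)} {i : Fin n} {T : List (Fin n)}
    {S : Finset (Fin m)} (hiT : i ∉ T) (hS : S.Nonempty) :
    obundleOf (pickAllocList R (i :: T) S) i = {bestItem (R i) S hS} := by
  simp only [pickAllocList]
  rw [dif_pos hS, obundleOf_update_self, obundleOf_not_mem hiT]
  rfl

end Stmt6Aux
section Stmt6Aux2

open Finset

variable {n m : ℕ}

def gf (n : ℕ) (hn0 : 0 < n) : ℕ → Fin n := fun t => ⟨min t (n - 1), by omega⟩

lemma lastDictSeq_eq (hn0 : 0 < n) :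
    lastDictSeq n m hn0 = (List.range m).map (gf n hn0) := rfl

lemma seq_split_last (hn0 : 0 < n) (hnm : n ≤ m) :
    lastDictSeq n m hn0
      = ((List.range (n - 1)).map (gf n hn0))
          ++ List.replicate (m - (n - 1)) (⟨n - 1, by omega⟩ : Fin n) := by
  rw [lastDictSeq_eq]
  conv_lhs => rw [show m = (n - 1) + (m - (n - 1)) by omega, List.range_add]
  rw [List.map_append, List.map_map]
  congr 1
  have hfun : (gf n hn0) ∘ (fun x => (n - 1) + x)
      = Function.const ℕ (⟨n - 1, by omega⟩ : Fin n) := by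
    funext t
    apply Fin.ext
    show min ((n - 1) + t) (n - 1) = n - 1
    omega
  rw [hfun, List.map_const, List.length_range]

lemma seq_split_at (hn0 : 0 < n) {iv : ℕ} (hiv : iv < m) :
    lastDictSeq n m hn0
      = ((List.range iv).map (gf n hn0))
          ++ gf n hn0 iv
            :: ((List.range (m - iv - 1)).map (fun t => gf n hn0 (iv + 1 + t))) := by
  rw [lastDictSeq_eq]
  conv_lhs => rw [show m = (iv + 1) + (m - iv - 1) by omega, List.range_add]
  rw [List.range_succ, List.map_append, List.map_append, List.map_map]
  simp only [List.map_cons, List.map_nil, List.cons_append, List.nil_append,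
    List.append_assoc, List.singleton_append, Function.comp]
  rfl

lemma not_mem_prefix (hn0 : 0 < n) {iv : ℕ} {i : Fin n} (hi : (i : ℕ) = iv) :
    i ∉ (List.range iv).map (gf n hn0) := by
  intro hmem
  rcases List.mem_map.1 hmem with ⟨t, ht, hte⟩
  have ht' := List.mem_range.1 ht
  have h2 : min t (n - 1) = iv := by
    have := congrArg Fin.val hte
    simpa [gf, hi] using this
  omega

lemma not_mem_suffix (hn0 : 0 < n) {iv : ℕ} {i : Fin n} (hi : (i : ℕ) = iv)
    (hiv : iv < n - 1) {k : ℕ} :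
    i ∉ (List.range k).map (fun t => gf n hn0 (iv + 1 + t)) := by
  intro hmem
  rcases List.mem_map.1 hmem with ⟨t, ht, hte⟩
  have h2 : min (iv + 1 + t) (n - 1) = iv := by
    have := congrArg Fin.val hte
    simpa [gf, hi] using this
  omega

lemma mech_bundle_player (hn0 : 0 < n) (hnm : n ≤ m) (R : Fin n → Equiv.Perm (Fin m))
    {i : Fin n} (hi : (i : ℕ) < n - 1)
    (hS : (rem R ((List.range (i : ℕ)).map (gf n hn0)) Finset.univ).Nonempty) :
    obundleOf (pickMech (lastDictSeq n m hn0) R) i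
      = {bestItem (R i) (rem R ((List.range (i : ℕ)).map (gf n hn0)) Finset.univ) hS} := by
  have him : (i : ℕ) < m := by omega
  rw [pickMech, seq_split_at hn0 him, obundle_append _ _ _ (not_mem_prefix hn0 rfl)]
  have hgi : gf n hn0 (i : ℕ) = i := by
    apply Fin.ext
    show min (i : ℕ) (n - 1) = (i : ℕ)
    omega
  rw [hgi]
  exact singleton_bundle (not_mem_suffix hn0 rfl hi) hS

lemma mech_bundle_last (hn0 : 0 < n) (hnm : n ≤ m) (R : Fin n → Equiv.Perm (Fin m)) :
    obundleOf (pickMech (lastDictSeq n m hn0) R) (⟨n - 1, by omega⟩ : Fin n)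
      = rem R ((List.range (n - 1)).map (gf n hn0)) Finset.univ := by
  rw [pickMech, seq_split_last hn0 hnm,
    obundle_append ((List.range (n - 1)).map (gf n hn0)) _ _ (not_mem_prefix hn0 rfl)]
  apply replicate_bundle
  have h1 := rem_card_le R ((List.range (n - 1)).map (gf n hn0)) (Finset.univ : Finset (Fin m))
  simp only [Finset.card_univ, Fintype.card_fin, List.length_map, List.length_range] at h1
  omega

end Stmt6Aux2
section Stmt6Aux3

open Finset

variable {n m : ℕ}

lemma mms_nonneg (hn0 : 0 < n) {v : Fin m → ℝ} (hv : ∀ j, 0 ≤ v j) : 0 ≤ mms n v := by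
  haveI : Nonempty (Fin n) := ⟨⟨0, hn0⟩⟩
  have h1 : ∀ (f : Fin m → Fin n), (0:ℝ) ≤ ⨅ i, bundleVal v (bundleOf f i) := by
    intro f
    apply le_ciInf
    intro i
    exact Finset.sum_nonneg fun j _ => hv j
  have h2 : (⨅ i, bundleVal v (bundleOf (fun _ : Fin m => (⟨0, hn0⟩ : Fin n)) i)) ≤ mms n v := by
    unfold mms
    exact le_ciSup (f := fun f : Fin m → Fin n => ⨅ i, bundleVal v (bundleOf f i))
      (Set.Finite.bddAbove (Set.finite_range _)) (fun _ => ⟨0, hn0⟩)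
  exact le_trans (h1 _) h2

lemma mms_exists (hn0 : 0 < n) (v : Fin m → ℝ) :
    ∃ f : Fin m → Fin n, ∀ i, mms n v ≤ bundleVal v (bundleOf f i) := by
  haveI : Nonempty (Fin n) := ⟨⟨0, hn0⟩⟩
  obtain ⟨f, hf⟩ := exists_eq_ciSup_of_finite
    (f := fun f : Fin m → Fin n => ⨅ i, bundleVal v (bundleOf f i))
  refine ⟨f, fun i => ?_⟩
  unfold mms
  rw [← hf]
  exact ciInf_le (Set.Finite.bddBelow (Set.finite_range _)) i

lemma sum_card_bundles (f : Fin m → Fin n) : ∑ i, (bundleOf f i).card = m := by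
  have h := Finset.card_eq_sum_card_fiberwise
    (s := (Finset.univ : Finset (Fin m))) (t := (Finset.univ : Finset (Fin n))) (f := f)
    (fun x _ => Finset.mem_univ _)
  rw [Finset.card_univ, Fintype.card_fin] at h
  simpa [bundleOf] using h.symm

lemma exists_two_avoid (hn2 : 2 ≤ n) (f : Fin m → Fin n) {A : Finset (Fin m)}
    (hA : A.card ≤ n - 2) :
    ∃ i1 i2 : Fin n, i1 ≠ i2 ∧ (∀ j ∈ A, f j ≠ i1) ∧ (∀ j ∈ A, f j ≠ i2) := by
  have h1 : (A.image f).card ≤ n - 2 := le_trans Finset.card_image_le hA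
  have h2 : 1 < ((Finset.univ : Finset (Fin n)) \ A.image f).card := by
    have h3 := Finset.card_sdiff_of_subset (Finset.subset_univ (A.image f))
    rw [Finset.card_univ, Fintype.card_fin] at h3
    omega
  obtain ⟨i1, hi1, i2, hi2, hne⟩ := Finset.one_lt_card.1 h2
  exact ⟨i1, i2, hne,
    fun j hj he => (Finset.mem_sdiff.1 hi1).2 (he ▸ Finset.mem_image_of_mem f hj),
    fun j hj he => (Finset.mem_sdiff.1 hi2).2 (he ▸ Finset.mem_image_of_mem f hj)⟩

lemma exists_one_avoid (hn1 : 0 < n) (f : Fin m → Fin n) {A : Finset (Fin m)}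
    (hA : A.card ≤ n - 1) : ∃ i0 : Fin n, ∀ j ∈ A, f j ≠ i0 := by
  have h1 : (A.image f).card ≤ n - 1 := le_trans Finset.card_image_le hA
  have h2 : 0 < ((Finset.univ : Finset (Fin n)) \ A.image f).card := by
    have h3 := Finset.card_sdiff_of_subset (Finset.subset_univ (A.image f))
    rw [Finset.card_univ, Fintype.card_fin] at h3
    omega
  obtain ⟨i0, hi0⟩ := Finset.card_pos.1 h2
  exact ⟨i0, fun j hj he => (Finset.mem_sdiff.1 hi0).2 (he ▸ Finset.mem_image_of_mem f hj)⟩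

lemma bestItem_ge {σ : Equiv.Perm (Fin m)} {v : Fin m → ℝ} (hv : Consistent v σ)
    {S : Finset (Fin m)} (hS : S.Nonempty) {c : ℕ} (hc : c < m)
    (hcard : m - c ≤ S.card) :
    v (σ ⟨c, hc⟩) ≤ v (bestItem σ S hS) := by
  have hPcard : (S.image σ.symm).card = S.card :=
    Finset.card_image_of_injective _ σ.symm.injective
  have hinter : ((S.image σ.symm) ∩ Finset.Iic (⟨c, hc⟩ : Fin m)).Nonempty := by
    rw [← Finset.card_pos]
    have h1 := Finset.card_inter_add_card_union (S.image σ.symm)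
      (Finset.Iic (⟨c, hc⟩ : Fin m))
    have h2 : ((S.image σ.symm) ∪ Finset.Iic (⟨c, hc⟩ : Fin m)).card ≤ m := by
      have h4 := Finset.card_le_univ ((S.image σ.symm) ∪ Finset.Iic (⟨c, hc⟩ : Fin m))
      rwa [Fintype.card_fin] at h4
    have h3 : (Finset.Iic (⟨c, hc⟩ : Fin m)).card = c + 1 := Fin.card_Iic (⟨c, hc⟩ : Fin m)
    omega
  obtain ⟨p, hp⟩ := hinter
  have hpP : p ∈ S.image σ.symm := (Finset.mem_inter.1 hp).1
  have hpc : p ≤ ⟨c, hc⟩ := Finset.mem_Iic.1 (Finset.mem_inter.1 hp).2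
  have h5 : (S.image σ.symm).min' (hS.image σ.symm) ≤ ⟨c, hc⟩ :=
    le_trans (Finset.min'_le _ _ hpP) hpc
  exact hv _ _ h5

lemma strictMono_nat_le {c : ℕ} {f : Fin c → ℕ} (h : StrictMono f) :
    ∀ (k : ℕ) (hk : k < c), k ≤ f ⟨k, hk⟩ := by
  intro k
  induction k with
  | zero => intro _; exact Nat.zero_le _
  | succ k ih =>
    intro hk1
    have hk : k < c := by omega
    have h1 := ih hk
    have h2 : f ⟨k, hk⟩ < f ⟨k + 1, hk1⟩ := h (by simp [Fin.lt_def])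
    omega

lemma dual_sum {g : ℕ → ℝ} (hg : ∀ a b : ℕ, a ≤ b → g b ≤ g a) {m' : ℕ}
    {K : Finset ℕ} (hK : ∀ k ∈ K, k < m') :
    ∑ t ∈ Finset.Ico (m' - K.card) m', g t ≤ ∑ k ∈ K, g k := by
  have hcm : K.card ≤ m' := by
    have h1 : K ⊆ Finset.range m' := fun k hk => Finset.mem_range.2 (hK k hk)
    have h2 := Finset.card_le_card h1
    rwa [Finset.card_range] at h2
  set c := K.card with hc
  have hcc : K.card = c := hc.symm
  set e := K.orderEmbOfFin hcc with he
  have hemem : ∀ t : Fin c, e t ∈ K := fun t => Finset.orderEmbOfFin_mem K hcc t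
  have hbound : ∀ t : Fin c, e t ≤ m' - c + t := by
    intro t
    have hF : StrictMono (fun s : Fin c => m' - 1 - e s.rev) := by
      intro a b hab
      have h1 : e b.rev < e a.rev := e.strictMono (Fin.rev_lt_rev.mpr hab)
      have h2 : e a.rev < m' := hK _ (hemem _)
      have h2' : e b.rev < m' := hK _ (hemem _)
      show m' - 1 - (e a.rev) < m' - 1 - (e b.rev)
      omega
    have h3 := strictMono_nat_le hF (t.rev : ℕ) t.rev.isLt
    simp only [Fin.eta] at h3
    rw [Fin.rev_rev] at h3
    have h4 := Fin.val_rev t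
    have h5 : e t < m' := hK _ (hemem t)
    have h6 := t.isLt
    omega
  have hKimg : K = Finset.image (fun t : Fin c => e t) Finset.univ := by
    ext k
    simp only [Finset.mem_image, Finset.mem_univ, true_and]
    constructor
    · intro hk
      have hr : k ∈ Set.range ⇑e := by
        rw [Finset.range_orderEmbOfFin]; exact hk
      rcases hr with ⟨t, ht⟩; exact ⟨t, ht⟩
    · rintro ⟨t, rfl⟩; exact hemem t
  conv_rhs => rw [hKimg]
  rw [Finset.sum_image (fun x _ y _ hxy => e.injective hxy)]
  rw [Finset.sum_Ico_eq_sum_range]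
  have h7 : m' - (m' - c) = c := by omega
  rw [h7, ← Fin.sum_univ_eq_sum_range (fun t => g (m' - c + t)) c]
  apply Finset.sum_le_sum
  intro t _
  exact hg _ _ (hbound t)

noncomputable def posVal (σ : Equiv.Perm (Fin m)) (v : Fin m → ℝ) : ℕ → ℝ :=
  fun t => if h : t < m then v (σ ⟨t, h⟩) else 0

lemma posVal_anti {σ : Equiv.Perm (Fin m)} {v : Fin m → ℝ} (hv0 : ∀ j, 0 ≤ v j)
    (hcons : Consistent v σ) : ∀ a b : ℕ, a ≤ b → posVal σ v b ≤ posVal σ v a := by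
  intro a b hab
  unfold posVal
  by_cases hb : b < m
  · have ha : a < m := by omega
    rw [dif_pos hb, dif_pos ha]
    exact hcons ⟨a, ha⟩ ⟨b, hb⟩ hab
  · rw [dif_neg hb]
    by_cases ha : a < m
    · rw [dif_pos ha]; exact hv0 _
    · rw [dif_neg ha]

lemma posVal_nonneg {σ : Equiv.Perm (Fin m)} {v : Fin m → ℝ} (hv0 : ∀ j, 0 ≤ v j)
    (t : ℕ) : 0 ≤ posVal σ v t := by
  unfold posVal
  by_cases ht : t < m
  · rw [dif_pos ht]; exact hv0 _
  · rw [dif_neg ht]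

lemma sum_reindex (σ : Equiv.Perm (Fin m)) (v : Fin m → ℝ) (T : Finset (Fin m)) :
    bundleVal v T = ∑ t ∈ T.image (fun j => ((σ.symm j : Fin m) : ℕ)), posVal σ v t := by
  rw [Finset.sum_image (fun x _ y _ hxy => σ.symm.injective (Fin.val_injective hxy))]
  unfold bundleVal posVal
  apply Finset.sum_congr rfl
  intro j _
  rw [dif_pos (σ.symm j).isLt]
  simp

end Stmt6Aux3
section Stmt6Aux4

open Finset

variable {n m : ℕ}

lemma card_low_filter {c : ℕ} :
    ((Finset.univ : Finset (Fin m)).filter fun k : Fin m => (k : ℕ) < c).card ≤ c := by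
  have h1 : ((Finset.univ : Finset (Fin m)).filter fun k : Fin m => (k : ℕ) < c).card
      ≤ (Finset.range c).card :=
    Finset.card_le_card_of_injOn (fun k : Fin m => (k : ℕ))
      (fun k hk => Finset.mem_range.2 (Finset.mem_filter.1 hk).2)
      (fun a _ b _ h => Fin.val_injective h)
  rwa [Finset.card_range] at h1

lemma mms_le_q (hn2 : 2 ≤ n) (hm2 : n + 2 ≤ m) {v : Fin m → ℝ} (hv0 : ∀ j, 0 ≤ v j)
    {σ : Equiv.Perm (Fin m)} (hcons : Consistent v σ) :
    mms n v ≤ (((m - n + 2) / 2 : ℕ) : ℝ) * v (σ ⟨n - 2, by omega⟩) := by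
  set q : ℕ := (m - n + 2) / 2 with hq
  set x := v (σ ⟨n - 2, by omega⟩) with hx
  have hx0 : 0 ≤ x := hv0 _
  obtain ⟨f, hf⟩ := mms_exists (by omega : 0 < n) v
  set A := Finset.image σ ((Finset.univ : Finset (Fin m)).filter
    fun k : Fin m => (k : ℕ) < n - 2) with hA
  have hAcard : A.card ≤ n - 2 := by
    rw [hA, Finset.card_image_of_injective _ σ.injective]
    exact card_low_filter
  have hnotA : ∀ j : Fin m, j ∉ A → v j ≤ x := by
    intro j hj
    have h1 : ¬ ((σ.symm j : ℕ) < n - 2) := by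
      intro h2
      apply hj
      rw [hA]
      exact Finset.mem_image.2 ⟨σ.symm j,
        Finset.mem_filter.2 ⟨Finset.mem_univ _, h2⟩, Equiv.apply_symm_apply _ _⟩
    have h3 : (⟨n - 2, by omega⟩ : Fin m) ≤ σ.symm j := by
      rw [Fin.le_def]
      exact Nat.not_lt.1 h1
    have h4 := hcons _ _ h3
    rwa [Equiv.apply_symm_apply] at h4
  obtain ⟨i1, i2, hi12, hav1, hav2⟩ := exists_two_avoid hn2 f hAcard
  have hb : ∀ i' : Fin n, (∀ j ∈ A, f j ≠ i') →
      bundleVal v (bundleOf f i') ≤ ((bundleOf f i').card : ℝ) * x := by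
    intro i' hav
    have h5 := Finset.sum_le_card_nsmul (bundleOf f i') v x (by
      intro j hj
      exact hnotA j (fun hjA => hav j hjA (Finset.mem_filter.1 hj).2))
    rw [nsmul_eq_mul] at h5
    exact h5
  by_cases hne : ∀ i' : Fin n, i' ≠ i1 → i' ≠ i2 → (bundleOf f i').Nonempty
  · have hsum := sum_card_bundles f
    have hsplit := Finset.sum_sdiff (f := fun i' => (bundleOf f i').card)
      (Finset.subset_univ ({i1, i2} : Finset (Fin n)))
    beta_reduce at hsplit
    rw [Finset.sum_pair hi12] at hsplit
    have hcard2 : ((Finset.univ : Finset (Fin n)) \ {i1, i2}).card = n - 2 := by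
      rw [Finset.card_sdiff_of_subset (Finset.subset_univ _), Finset.card_univ, Fintype.card_fin,
        Finset.card_pair hi12]
    have hlow : ((Finset.univ : Finset (Fin n)) \ {i1, i2}).card * 1
        ≤ ∑ i' ∈ (Finset.univ : Finset (Fin n)) \ {i1, i2}, (bundleOf f i').card := by
      have h9 := Finset.card_nsmul_le_sum ((Finset.univ : Finset (Fin n)) \ {i1, i2})
        (fun i' => (bundleOf f i').card) 1 (by
          intro i' hi'
          have h10 := Finset.mem_sdiff.1 hi'
          have h11 : i' ≠ i1 := fun e => h10.2 (by simp [e])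
          have h12 : i' ≠ i2 := fun e => h10.2 (by simp [e])
          exact Finset.card_pos.2 (hne i' h11 h12))
      simpa using h9
    rw [hcard2] at hlow
    have hkey : (bundleOf f i1).card + (bundleOf f i2).card ≤ m - n + 2 := by omega
    have hmin : min (bundleOf f i1).card (bundleOf f i2).card ≤ q := by
      rw [hq]; omega
    rcases le_total (bundleOf f i1).card (bundleOf f i2).card with hle | hle
    · calc mms n v ≤ bundleVal v (bundleOf f i1) := hf i1
        _ ≤ ((bundleOf f i1).card : ℝ) * x := hb i1 hav1
        _ ≤ (q : ℝ) * x := by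
            apply mul_le_mul_of_nonneg_right _ hx0
            exact_mod_cast (by omega : (bundleOf f i1).card ≤ q)
    · calc mms n v ≤ bundleVal v (bundleOf f i2) := hf i2
        _ ≤ ((bundleOf f i2).card : ℝ) * x := hb i2 hav2
        _ ≤ (q : ℝ) * x := by
            apply mul_le_mul_of_nonneg_right _ hx0
            exact_mod_cast (by omega : (bundleOf f i2).card ≤ q)
  · push_neg at hne
    obtain ⟨i0, hi01, hi02, hi0e⟩ := hne
    have h12 : bundleVal v (bundleOf f i0) = 0 := by
      rw [hi0e]
      simp [bundleVal]
    calc mms n v ≤ bundleVal v (bundleOf f i0) := hf i0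
      _ = 0 := h12
      _ ≤ (q : ℝ) * x := by positivity

lemma mms_le_rest (hn2 : 2 ≤ n) (hm2 : n + 2 ≤ m) {v : Fin m → ℝ} (hv0 : ∀ j, 0 ≤ v j)
    {σ : Equiv.Perm (Fin m)} (hcons : Consistent v σ)
    {S : Finset (Fin m)} (hScard : m - (n - 1) ≤ S.card) :
    mms n v ≤ bundleVal v S := by
  obtain ⟨f, hf⟩ := mms_exists (by omega : 0 < n) v
  set A := Finset.image σ ((Finset.univ : Finset (Fin m)).filter
    fun k : Fin m => (k : ℕ) < n - 1) with hA
  have hAcard : A.card ≤ n - 1 := by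
    rw [hA, Finset.card_image_of_injective _ σ.injective]
    exact card_low_filter
  obtain ⟨i0, hav⟩ := exists_one_avoid (by omega : 0 < n) f hAcard
  have hTpos : ∀ j ∈ bundleOf f i0, n - 1 ≤ ((σ.symm j : Fin m) : ℕ) := by
    intro j hj
    by_contra h1
    push_neg at h1
    have hjA : j ∈ A := by
      rw [hA]
      exact Finset.mem_image.2 ⟨σ.symm j,
        Finset.mem_filter.2 ⟨Finset.mem_univ _, h1⟩, Equiv.apply_symm_apply _ _⟩
    exact hav j hjA (Finset.mem_filter.1 hj).2
  have hScard2 : (S.image (fun j => ((σ.symm j : Fin m) : ℕ))).card = S.card :=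
    Finset.card_image_of_injective _
      (fun a b hab => σ.symm.injective (Fin.val_injective hab))
  calc mms n v ≤ bundleVal v (bundleOf f i0) := hf i0
    _ = ∑ t ∈ (bundleOf f i0).image (fun j => ((σ.symm j : Fin m) : ℕ)), posVal σ v t :=
        sum_reindex σ v _
    _ ≤ ∑ t ∈ Finset.Ico (n - 1) m, posVal σ v t := by
        apply Finset.sum_le_sum_of_subset_of_nonneg
        · intro t ht
          rcases Finset.mem_image.1 ht with ⟨j, hj, rfl⟩
          exact Finset.mem_Ico.2 ⟨hTpos j hj, (σ.symm j).isLt⟩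
        · intro t _ _
          exact posVal_nonneg hv0 t
    _ ≤ ∑ t ∈ Finset.Ico (m - (S.image (fun j => ((σ.symm j : Fin m) : ℕ))).card) m,
          posVal σ v t := by
        apply Finset.sum_le_sum_of_subset_of_nonneg
        · apply Finset.Ico_subset_Ico _ le_rfl
          rw [hScard2]
          omega
        · intro t _ _
          exact posVal_nonneg hv0 t
    _ ≤ ∑ t ∈ S.image (fun j => ((σ.symm j : Fin m) : ℕ)), posVal σ v t := by
        apply dual_sum (posVal_anti hv0 hcons)
        intro k hk
        rcases Finset.mem_image.1 hk with ⟨j, _, rfl⟩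
        exact (σ.symm j).isLt
    _ = bundleVal v S := (sum_reindex σ v S).symm

end Stmt6Aux4
lemma bestItem_mem_of_eq {m : ℕ} (τ : Equiv.Perm (Fin m)) (S1 S2 : Finset (Fin m))
    (h1 : S1.Nonempty) (hEq : S1 = S2) : bestItem τ S1 h1 ∈ S2 := by
  subst hEq; exact bestItem_mem h1

/-- For any `n ≥ 2` and `m ≥ n + 2`, the mechanism for the ordinal model induced
by the picking sequence `p₁ p₂ … p_{n-1} pₙ pₙ … pₙ` of length `m` is truthful and is a
`1/⌊(m-n+2)/2⌋`-approximation. -/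
theorem stmt6 (n m : ℕ) (hn : 2 ≤ n) (hm : n + 2 ≤ m) :
    OrdTruthfulO (pickMech (m := m) (lastDictSeq n m (by omega))) ∧
    OrdApproxO ((1 : ℝ) / (((m - n + 2) / 2 : ℕ) : ℝ))
      (pickMech (m := m) (lastDictSeq n m (by omega))) := by
  have hn0 : 0 < n := by omega
  have hnm : n ≤ m := by omega
  have hlast : n - 1 < n := Nat.sub_lt hn0 Nat.one_pos
  constructor
  · -- Truthfulness
    intro R i v hv0 hcons σ'
    set R' := Function.update R i σ' with hR'
    by_cases hi : (i : ℕ) < n - 1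
    · -- player i < n-1 : receives her best remaining item at her turn
      have hRcongr : ∀ p ∈ (List.range (i : ℕ)).map (gf n hn0), R' p = R p := by
        intro p hp
        apply Function.update_of_ne
        intro e
        exact not_mem_prefix hn0 rfl (e ▸ hp)
      have hSeq : rem R' ((List.range (i : ℕ)).map (gf n hn0)) Finset.univ
          = rem R ((List.range (i : ℕ)).map (gf n hn0)) Finset.univ :=
        rem_congr R' R _ _ hRcongr
      have hS : (rem R ((List.range (i : ℕ)).map (gf n hn0)) Finset.univ).Nonempty := by
        rw [← Finset.card_pos]
        have h1 := rem_card_ge R ((List.range (i : ℕ)).map (gf n hn0))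
          (Finset.univ : Finset (Fin m))
        simp only [Finset.card_univ, Fintype.card_fin, List.length_map,
          List.length_range] at h1
        omega
      have hS' : (rem R' ((List.range (i : ℕ)).map (gf n hn0)) Finset.univ).Nonempty := by
        rw [hSeq]; exact hS
      rw [mech_bundle_player hn0 hnm R hi hS, mech_bundle_player hn0 hnm R' hi hS']
      simp only [bundleVal, Finset.sum_singleton]
      exact bestItem_best hS hcons (bestItem_mem_of_eq _ _ _ hS' hSeq)
    · -- the last player: her bundle does not depend on her report at all
      have hieq : i = ⟨n - 1, hlast⟩ := by
        apply Fin.ext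
        have h := i.isLt
        simp only []
        omega
      subst hieq
      have hRcongr : ∀ p ∈ (List.range (n - 1)).map (gf n hn0), R' p = R p := by
        intro p hp
        apply Function.update_of_ne
        intro e
        exact not_mem_prefix hn0 rfl (e ▸ hp)
      rw [mech_bundle_last hn0 hnm R, mech_bundle_last hn0 hnm R',
        rem_congr R' R _ _ hRcongr]
  · -- Approximation
    intro V hV0 R hcons i
    have hqpos : (0:ℝ) < (((m - n + 2) / 2 : ℕ) : ℝ) := by
      exact_mod_cast (by omega : 0 < (m - n + 2) / 2)
    by_cases hi : (i : ℕ) < n - 1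
    · have hS : (rem R ((List.range (i : ℕ)).map (gf n hn0)) Finset.univ).Nonempty := by
        rw [← Finset.card_pos]
        have h1 := rem_card_ge R ((List.range (i : ℕ)).map (gf n hn0))
          (Finset.univ : Finset (Fin m))
        simp only [Finset.card_univ, Fintype.card_fin, List.length_map,
          List.length_range] at h1
        omega
      rw [mech_bundle_player hn0 hnm R hi hS]
      simp only [bundleVal, Finset.sum_singleton]
      have h1 : V i ((R i) ⟨n - 2, by omega⟩)
          ≤ V i (bestItem (R i) (rem R ((List.range (i : ℕ)).map (gf n hn0))
              Finset.univ) hS) := by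
        apply bestItem_ge (hcons i) hS (c := n - 2) (hc := by omega)
        have h2 := rem_card_ge R ((List.range (i : ℕ)).map (gf n hn0))
          (Finset.univ : Finset (Fin m))
        simp only [Finset.card_univ, Fintype.card_fin, List.length_map,
          List.length_range] at h2
        omega
      have h3 := mms_le_q hn hm (hV0 i) (hcons i)
      calc (1 : ℝ) / (((m - n + 2) / 2 : ℕ) : ℝ) * mms n (V i)
          ≤ (1 : ℝ) / (((m - n + 2) / 2 : ℕ) : ℝ)
            * ((((m - n + 2) / 2 : ℕ) : ℝ) * V i ((R i) ⟨n - 2, by omega⟩)) := by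
            apply mul_le_mul_of_nonneg_left h3 (by positivity)
        _ = V i ((R i) ⟨n - 2, by omega⟩) := by field_simp
        _ ≤ _ := h1
    · have hieq : i = ⟨n - 1, hlast⟩ := by
        apply Fin.ext
        have h := i.isLt
        simp only []
        omega
      subst hieq
      rw [mech_bundle_last hn0 hnm R]
      have hcard : m - (n - 1)
          ≤ (rem R ((List.range (n - 1)).map (gf n hn0)) Finset.univ).card := by
        have h2 := rem_card_ge R ((List.range (n - 1)).map (gf n hn0))
          (Finset.univ : Finset (Fin m))
        simp only [Finset.card_univ, Fintype.card_fin, List.length_map,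
          List.length_range] at h2
        omega
      have h4 := mms_le_rest hn hm (hV0 _) (hcons ⟨n - 1, hlast⟩) hcard
      have hmms0 := mms_nonneg hn0 (hV0 ⟨n - 1, hlast⟩)
      have hρle1 : (1 : ℝ) / (((m - n + 2) / 2 : ℕ) : ℝ) ≤ 1 := by
        rw [div_le_one hqpos]
        exact_mod_cast (by omega : 1 ≤ (m - n + 2) / 2)
      calc (1 : ℝ) / (((m - n + 2) / 2 : ℕ) : ℝ) * mms n (V ⟨n - 1, hlast⟩)
          ≤ 1 * mms n (V ⟨n - 1, hlast⟩) := mul_le_mul_of_nonneg_right hρle1 hmms0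
        _ = mms n (V ⟨n - 1, hlast⟩) := one_mul _
        _ ≤ _ := h4
end

section
/- (Monotonicity Lemma) Let v be an additive valuation on a finite set M of items, let n ≥ 2, and let j ∈ M be any item. Then μ_v(n−1, M∖{j}) ≥ μ_v(n, M). -/
open Finset

/-- The maximin share `μ_v(k, S)` of the additive valuation `v` on the subset `S` of items:
the maximum over all partitions of `S` into `k` possibly empty bundles of the minimum bundle
value. -/
noncomputable def mmsOn {ι : Type*} [Fintype ι] [DecidableEq ι] (k : ℕ) (v : ι → ℝ)
    (S : Finset ι) : ℝ :=
  ⨆ f : ι → Fin k, ⨅ i : Fin k, ∑ x ∈ S.filter (fun x => f x = i), v x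

/-- **Monotonicity Lemma.** For an additive valuation `v` on a finite set `M` of
items, `n ≥ 2` and any item `j`, we have `μ_v(n-1, M \ {j}) ≥ μ_v(n, M)`. -/
theorem stmt8 {ι : Type*} [Fintype ι] [DecidableEq ι] (n : ℕ) (hn : 2 ≤ n)
    (v : ι → ℝ) (hv : ∀ j, 0 ≤ v j) (j : ι) :
    mmsOn n v Finset.univ ≤ mmsOn (n - 1) v (Finset.univ.erase j) := by
  classical
  obtain ⟨m, rfl⟩ : ∃ m, n = m + 1 := ⟨n - 1, by omega⟩
  have hm : 1 ≤ m := by omega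
  have hm' : (m + 1) - 1 = m := rfl
  rw [hm']
  haveI : Nonempty (Fin m) := ⟨⟨0, by omega⟩⟩
  unfold mmsOn
  apply ciSup_le
  intro f
  set i₀ : Fin (m + 1) := f j with hi₀
  -- inverse of succAbove on the complement of i₀
  have hex : ∀ l : Fin (m + 1), l ≠ i₀ → ∃ i : Fin m, i₀.succAbove i = l := by
    intro l hl
    exact Fin.exists_succAbove_eq hl
  set e : Fin (m + 1) → Fin m := fun l =>
    if h : l = i₀ then Classical.arbitrary _ else Classical.choose (hex l h) with he
  have he_spec : ∀ i : Fin m, e (i₀.succAbove i) = i := by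
    intro i
    have hne : i₀.succAbove i ≠ i₀ := Fin.succAbove_ne i₀ i
    have h1 : i₀.succAbove (Classical.choose (hex _ hne)) = i₀.succAbove i :=
      Classical.choose_spec (hex _ hne)
    have := Fin.succAbove_right_injective (p := i₀) h1
    simp [he, hne, this]
  set g : ι → Fin m := fun x => e (f x) with hg
  have hb : BddAbove (Set.range fun f : ι → Fin m =>
      ⨅ i : Fin m, ∑ x ∈ (Finset.univ.erase j).filter (fun x => f x = i), v x) :=
    Set.Finite.bddAbove (Set.finite_range _)
  refine le_trans ?_ (le_ciSup hb g)
  apply le_ciInf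
  intro i
  have hbd : BddBelow (Set.range fun i : Fin (m + 1) =>
      ∑ x ∈ Finset.univ.filter (fun x => f x = i), v x) :=
    Set.Finite.bddBelow (Set.finite_range _)
  refine le_trans (ciInf_le hbd (i₀.succAbove i)) ?_
  apply Finset.sum_le_sum_of_subset_of_nonneg
  · intro x hx
    simp only [Finset.mem_filter, Finset.mem_univ, true_and] at hx
    have hne : i₀.succAbove i ≠ i₀ := Fin.succAbove_ne i₀ i
    simp only [Finset.mem_filter, Finset.mem_erase, Finset.mem_univ, true_and, and_true]
    constructor
    · rintro rfl
      exact hne hx.symm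
    · show e (f x) = i
      rw [hx, he_spec]
  · intro x _ _
    exact hv x
end
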